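/- arXiv:1502.04808 — 15 statements merged into one kernel-verified Lean document; each statement's English description precedes it below -/
import Mathlib

section
/- Let c > 0 and let y : [-1,1] → ℝ be a continuously differentiable solution of y'(r) = p'(c·(max(y(r),0))^{1/p} + g(r)) with y(-1) = 0. Then y(r) > y₀(r) := p'·∫_{-1}^r g(s) ds for all r ∈ (-1,1]. -/
open Set Filter
open Topology

theorem stmt1 (p c : ℝ) (hp : 1 < p) (hc : 0 < c) (g : ℝ → ℝ) (s₀ : ℝ)
    (hg_cont : ContinuousOn g (Set.Icc (-1) 1))
    (hs₀ : s₀ ∈ Set.Ioo (-1 : ℝ) 1)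
    (hgm1 : g (-1) = 0) (hg1 : g 1 = 0) (hgs₀ : g s₀ = 0)
    (hgpos : ∀ s ∈ Set.Ioo (-1 : ℝ) s₀, 0 < g s)
    (hgneg : ∀ s ∈ Set.Ioo s₀ (1 : ℝ), g s < 0)
    (hG : ∀ r ∈ Set.Ioo (-1 : ℝ) 1, 0 < ∫ s in (-1 : ℝ)..r, g s)
    (y : ℝ → ℝ) (hy_cont : ContinuousOn y (Set.Icc (-1) 1))
    (hy_ode : ∀ r ∈ Set.Ioo (-1 : ℝ) 1,
      HasDerivAt y (p / (p - 1) * (c * (max (y r) 0) ^ (1 / p) + g r)) r)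
    (hy_init : y (-1) = 0) :
    ∀ r ∈ Set.Ioc (-1 : ℝ) 1,
      (p / (p - 1)) * (∫ s in (-1 : ℝ)..r, g s) < y r := by
  have hp0 : (0 : ℝ) < p - 1 := by linarith
  have hq : 0 < p / (p - 1) := div_pos (by linarith) hp0
  have hep : 0 < 1 / p := by positivity
  -- continuity of the rpow map
  have hrpow : Continuous fun x : ℝ => x ^ (1 / p) := by
    rw [continuous_iff_continuousAt]
    intro x
    exact Real.continuousAt_rpow_const x _ (Or.inr hep.le)
  have hh_cont : ContinuousOn (fun s => (max (y s) 0) ^ (1 / p)) (Icc (-1) 1) :=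
    hrpow.comp_continuousOn ((continuous_id.max continuous_const).comp_continuousOn hy_cont)
  have hsubIcc : ∀ a b : ℝ, -1 ≤ a → b ≤ 1 → a ≤ b → Icc a b ⊆ Icc (-1 : ℝ) 1 :=
    fun a b ha hb _ x hx => ⟨le_trans ha hx.1, le_trans hx.2 hb⟩
  have hg_int : ∀ a b : ℝ, -1 ≤ a → b ≤ 1 → a ≤ b → IntervalIntegrable g MeasureTheory.volume a b := by
    intro a b ha hb hab
    exact (hg_cont.mono (by rw [uIcc_of_le hab]; exact hsubIcc a b ha hb hab)).intervalIntegrable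
  have hh_int : ∀ a b : ℝ, -1 ≤ a → b ≤ 1 → a ≤ b →
      IntervalIntegrable (fun s => (max (y s) 0) ^ (1 / p)) MeasureTheory.volume a b := by
    intro a b ha hb hab
    exact (hh_cont.mono (by rw [uIcc_of_le hab]; exact hsubIcc a b ha hb hab)).intervalIntegrable
  -- fundamental theorem of calculus on subintervals
  have key : ∀ a b : ℝ, -1 < a → a ≤ b → b < 1 →
      y b - y a = p / (p - 1) * c * (∫ s in a..b, (max (y s) 0) ^ (1 / p))
        + p / (p - 1) * (∫ s in a..b, g s) := by
    intro a b ha hab hb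
    have hsub : uIcc a b ⊆ Ioo (-1 : ℝ) 1 := by
      rw [uIcc_of_le hab]
      exact fun x hx => ⟨lt_of_lt_of_le ha hx.1, lt_of_le_of_lt hx.2 hb⟩
    have h1 : IntervalIntegrable (fun s => (max (y s) 0) ^ (1 / p)) MeasureTheory.volume a b :=
      hh_int a b ha.le hb.le hab
    have h2 : IntervalIntegrable g MeasureTheory.volume a b := hg_int a b ha.le hb.le hab
    have hftc := intervalIntegral.integral_eq_sub_of_hasDerivAt
      (f := y) (f' := fun s => p / (p - 1) * (c * (max (y s) 0) ^ (1 / p) + g s))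
      (fun x hx => hy_ode x (hsub hx)) (((h1.const_mul c).add h2).const_mul _)
    rw [← hftc, intervalIntegral.integral_const_mul,
      intervalIntegral.integral_add (h1.const_mul c) h2,
      intervalIntegral.integral_const_mul]
    ring
  -- monotonicity of z := y - q * G
  have mono : ∀ a b : ℝ, -1 < a → a ≤ b → b < 1 →
      y a - p / (p - 1) * ∫ s in (-1 : ℝ)..a, g s ≤
        y b - p / (p - 1) * ∫ s in (-1 : ℝ)..b, g s := by
    intro a b ha hab hb
    have hadd : (∫ s in (-1 : ℝ)..a, g s) + ∫ s in a..b, g s = ∫ s in (-1 : ℝ)..b, g s :=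
      intervalIntegral.integral_add_adjacent_intervals
        (hg_int (-1) a le_rfl (by linarith) ha.le) (hg_int a b ha.le hb.le hab)
    have hI : 0 ≤ ∫ s in a..b, (max (y s) 0) ^ (1 / p) :=
      intervalIntegral.integral_nonneg hab
        (fun x _ => Real.rpow_nonneg (le_max_right _ _) _)
    have hk := key a b ha hab hb
    nlinarith [mul_nonneg (mul_nonneg hq.le hc.le) hI]
  -- continuity of z on Icc
  have hGcont : ContinuousOn (fun r => ∫ s in (-1 : ℝ)..r, g s) (Icc (-1 : ℝ) 1) := by
    have := intervalIntegral.continuousOn_primitive_interval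
      (f := g) (a := (-1 : ℝ)) (b := 1) (μ := MeasureTheory.volume) ?_
    · rwa [uIcc_of_le (by norm_num : (-1 : ℝ) ≤ 1)] at this
    · rw [uIcc_of_le (by norm_num : (-1 : ℝ) ≤ 1)]
      exact hg_cont.integrableOn_Icc
  have hz_cont : ContinuousOn (fun r => y r - p / (p - 1) * ∫ s in (-1 : ℝ)..r, g s)
      (Icc (-1 : ℝ) 1) := hy_cont.sub (continuousOn_const.mul hGcont)
  -- z is nonnegative on Ioo (-1) 1, via the limit at -1
  have znn : ∀ r ∈ Ioo (-1 : ℝ) 1, 0 ≤ y r - p / (p - 1) * ∫ s in (-1 : ℝ)..r, g s := by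
    intro r hr
    have hzm1 : y (-1) - p / (p - 1) * ∫ s in (-1 : ℝ)..(-1 : ℝ), g s = 0 := by
      simp [hy_init]
    have htend : Tendsto (fun a => y a - p / (p - 1) * ∫ s in (-1 : ℝ)..a, g s)
        (𝓝[>] (-1 : ℝ)) (𝓝 0) := by
      rw [← hzm1, ← nhdsWithin_Ioo_eq_nhdsGT (show (-1 : ℝ) < 1 by norm_num)]
      exact ((hz_cont (-1) (by norm_num)).mono Ioo_subset_Icc_self).tendsto
    refine le_of_tendsto htend ?_
    filter_upwards [Ioo_mem_nhdsGT_of_mem ⟨le_refl (-1 : ℝ), hr.1⟩] with a ha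
    exact mono a r ha.1 ha.2.le hr.2
  -- y is positive on Ioo (-1) 1
  have ypos : ∀ s ∈ Ioo (-1 : ℝ) 1, 0 < y s := by
    intro s hs
    have h1 := znn s hs
    have h2 := mul_pos hq (hG s hs)
    linarith
  -- strict increase of z on Ioo
  have strict : ∀ a b : ℝ, -1 < a → a < b → b < 1 →
      y a - p / (p - 1) * ∫ s in (-1 : ℝ)..a, g s <
        y b - p / (p - 1) * ∫ s in (-1 : ℝ)..b, g s := by
    intro a b ha hab hb
    have hadd : (∫ s in (-1 : ℝ)..a, g s) + ∫ s in a..b, g s = ∫ s in (-1 : ℝ)..b, g s :=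
      intervalIntegral.integral_add_adjacent_intervals
        (hg_int (-1) a le_rfl (by linarith) ha.le) (hg_int a b ha.le hb.le hab.le)
    have hI : 0 < ∫ s in a..b, (max (y s) 0) ^ (1 / p) := by
      refine intervalIntegral.intervalIntegral_pos_of_pos_on
        (hh_int a b ha.le hb.le hab.le) (fun x hx => ?_) hab
      have hyx : 0 < y x := ypos x ⟨lt_trans ha hx.1, lt_trans hx.2 hb⟩
      have : max (y x) 0 = y x := max_eq_left hyx.le
      rw [this]
      exact Real.rpow_pos_of_pos hyx _
    have hk := key a b ha hab.le hb
    nlinarith [mul_pos (mul_pos hq hc) hI]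
  -- conclusion
  intro r hr
  rcases lt_or_eq_of_le hr.2 with hr1 | hr1
  · -- r < 1
    set a := ((-1 : ℝ) + r) / 2 with ha_def
    have ha1 : -1 < a := by rw [ha_def]; linarith [hr.1]
    have ha2 : a < r := by rw [ha_def]; linarith [hr.1]
    have h1 := znn a ⟨ha1, lt_trans ha2 hr1⟩
    have h2 := strict a r ha1 ha2 hr1
    linarith
  · -- r = 1
    subst hr1
    have h0 : (0 : ℝ) ∈ Ioo (-1 : ℝ) 1 := by norm_num
    have hhalf : (1 / 2 : ℝ) ∈ Ioo (-1 : ℝ) 1 := by norm_num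
    have h1 := znn 0 h0
    have h2 := strict 0 (1 / 2) (by norm_num) (by norm_num) (by norm_num)
    -- z 1 ≥ z (1/2) by taking the limit b → 1⁻
    have htend : Tendsto (fun b => y b - p / (p - 1) * ∫ s in (-1 : ℝ)..b, g s)
        (𝓝[<] (1 : ℝ)) (𝓝 (y 1 - p / (p - 1) * ∫ s in (-1 : ℝ)..(1 : ℝ), g s)) := by
      rw [← nhdsWithin_Ioo_eq_nhdsLT (show (-1 : ℝ) < 1 by norm_num)]
      exact ((hz_cont 1 (by norm_num)).mono Ioo_subset_Icc_self).tendsto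
    have h3 : y (1 / 2) - p / (p - 1) * (∫ s in (-1 : ℝ)..(1 / 2 : ℝ), g s) ≤
        y 1 - p / (p - 1) * ∫ s in (-1 : ℝ)..(1 : ℝ), g s := by
      refine ge_of_tendsto htend ?_
      filter_upwards [Ioo_mem_nhdsLT_of_mem
        (show (1 : ℝ) ∈ Ioc (1 / 2 : ℝ) 1 from ⟨by norm_num, le_rfl⟩)] with b hb
      exact mono (1 / 2) b (by norm_num) hb.1.le hb.2
    linarith
end

section
/- Let c ≤ 0 and let y : [-1,1] → ℝ be a continuously differentiable solution of y'(r) = p'(c·(max(y(r),0))^{1/p} + g(r)) with y(-1) = 0. Then y(r) ≤ y₀(r) := p'·∫_{-1}^r g(s) ds for all r ∈ [-1,1]. -/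
open Set Filter

theorem stmt2 (p c : ℝ) (hp : 1 < p) (hc : c ≤ 0) (g : ℝ → ℝ) (s₀ : ℝ)
    (hg_cont : ContinuousOn g (Set.Icc (-1) 1))
    (hs₀ : s₀ ∈ Set.Ioo (-1 : ℝ) 1)
    (hgm1 : g (-1) = 0) (hg1 : g 1 = 0) (hgs₀ : g s₀ = 0)
    (hgpos : ∀ s ∈ Set.Ioo (-1 : ℝ) s₀, 0 < g s)
    (hgneg : ∀ s ∈ Set.Ioo s₀ (1 : ℝ), g s < 0)
    (hG : ∀ r ∈ Set.Ioo (-1 : ℝ) 1, 0 < ∫ s in (-1 : ℝ)..r, g s)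
    (y : ℝ → ℝ) (hy_cont : ContinuousOn y (Set.Icc (-1) 1))
    (hy_ode : ∀ r ∈ Set.Ioo (-1 : ℝ) 1,
      HasDerivAt y (p / (p - 1) * (c * (max (y r) 0) ^ (1 / p) + g r)) r)
    (hy_init : y (-1) = 0) :
    ∀ r ∈ Set.Icc (-1 : ℝ) 1,
      y r ≤ (p / (p - 1)) * (∫ s in (-1 : ℝ)..r, g s) := by
  set p' : ℝ := p / (p - 1) with hp'
  have hp'pos : 0 < p' := div_pos (by linarith) (by linarith)
  set F : ℝ → ℝ := fun r => y r - p' * ∫ s in (-1 : ℝ)..r, g s with hF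
  have hInt : ∀ r ∈ Set.Icc (-1 : ℝ) 1, IntervalIntegrable g MeasureTheory.volume (-1) r := by
    intro r hr
    apply ContinuousOn.intervalIntegrable
    apply hg_cont.mono
    rw [Set.uIcc_of_le hr.1]
    exact Set.Icc_subset_Icc le_rfl hr.2
  have hFcont : ContinuousOn F (Set.Icc (-1) 1) := by
    apply hy_cont.sub
    apply ContinuousOn.mul continuousOn_const
    have h := intervalIntegral.continuousOn_primitive_interval' (hInt 1 (by norm_num))
      (Set.left_mem_uIcc)
    rwa [Set.uIcc_of_le (by norm_num : (-1:ℝ) ≤ 1)] at h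
  have hFderiv : ∀ x ∈ Set.Ioo (-1 : ℝ) 1, HasDerivAt F (p' * (c * (max (y x) 0) ^ (1 / p))) x := by
    intro x hx
    have hGd : HasDerivAt (fun r => ∫ s in (-1 : ℝ)..r, g s) (g x) x := by
      apply intervalIntegral.integral_hasDerivAt_right (hInt x ⟨hx.1.le, hx.2.le⟩)
      · exact ⟨Set.Icc (-1) 1, Icc_mem_nhds hx.1 hx.2,
          hg_cont.aestronglyMeasurable measurableSet_Icc⟩
      · exact hg_cont.continuousAt (Icc_mem_nhds hx.1 hx.2)
    have := (hy_ode x hx).sub ((hGd.const_mul p'))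
    refine this.congr_deriv ?_
    ring
  have hFanti : AntitoneOn F (Set.Icc (-1) 1) := by
    apply antitoneOn_of_deriv_nonpos (convex_Icc _ _) hFcont
    · intro x hx
      rw [interior_Icc] at hx
      exact (hFderiv x hx).differentiableAt.differentiableWithinAt
    · intro x hx
      rw [interior_Icc] at hx
      rw [(hFderiv x hx).deriv]
      have h1 : (0:ℝ) ≤ (max (y x) 0) ^ (1 / p) := Real.rpow_nonneg (le_max_right _ _) _
      have h2 : c * (max (y x) 0) ^ (1 / p) ≤ 0 := mul_nonpos_of_nonpos_of_nonneg hc h1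
      exact mul_nonpos_of_nonneg_of_nonpos hp'pos.le h2
  intro r hr
  have := hFanti (Set.left_mem_Icc.2 (by norm_num)) hr hr.1
  simp only [hF, hy_init, intervalIntegral.integral_same, mul_zero, sub_zero] at this
  linarith
end

section
/- If either (i) c = 0 and G(1) > 0, or (ii) c > 0 and G(1) ≥ 0, then there is no continuously differentiable solution y : [-1,1] → ℝ of y'(r) = p'(c·(max(y,0))^{1/p} + g(r)) satisfying y(-1) = 0 and y(1) ≤ 0. -/
open Set Filter

theorem stmt3 (p c : ℝ) (hp : 1 < p) (g : ℝ → ℝ) (s₀ : ℝ)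
    (hg_cont : ContinuousOn g (Set.Icc (-1) 1))
    (hs₀ : s₀ ∈ Set.Ioo (-1 : ℝ) 1)
    (hgm1 : g (-1) = 0) (hg1 : g 1 = 0) (hgs₀ : g s₀ = 0)
    (hgpos : ∀ s ∈ Set.Ioo (-1 : ℝ) s₀, 0 < g s)
    (hgneg : ∀ s ∈ Set.Ioo s₀ (1 : ℝ), g s < 0)
    (hG : ∀ r ∈ Set.Ioo (-1 : ℝ) 1, 0 < ∫ s in (-1 : ℝ)..r, g s)
    (hcase : (c = 0 ∧ 0 < ∫ s in (-1 : ℝ)..1, g s) ∨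
             (0 < c ∧ 0 ≤ ∫ s in (-1 : ℝ)..1, g s)) :
    ¬ ∃ y : ℝ → ℝ, ContinuousOn y (Set.Icc (-1) 1) ∧
      (∀ r ∈ Set.Ioo (-1 : ℝ) 1,
        HasDerivAt y (p / (p - 1) * (c * (max (y r) 0) ^ (1 / p) + g r)) r) ∧
      y (-1) = 0 ∧ y 1 ≤ 0 := by
  rintro ⟨y, hy_cont, hy_deriv, hy_m1, hy_1⟩
  have hp1 : (0:ℝ) < p - 1 := by linarith
  have hp' : 0 < p / (p - 1) := div_pos (by linarith) hp1
  have hc : 0 ≤ c := by rcases hcase with ⟨h,_⟩|⟨h,_⟩ <;> linarith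
  set M : ℝ → ℝ := fun r => max (y r) 0 ^ (1/p) with hMdef
  have hM_nonneg : ∀ r, 0 ≤ M r := fun r => Real.rpow_nonneg (le_max_right _ _) _
  have hM_cont : ContinuousOn M (Set.Icc (-1) 1) :=
    fun x hx => ((hy_cont x hx).max continuousWithinAt_const).rpow_const (Or.inr (by positivity))
  set f' : ℝ → ℝ := fun r => p / (p - 1) * (c * M r + g r) with hf'def
  have hf'_cont : ContinuousOn f' (Set.Icc (-1) 1) :=
    continuousOn_const.mul ((continuousOn_const.mul hM_cont).add hg_cont)
  -- key: for b in Icc, y b - y(-1) = ∫ f'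
  have key : ∀ b ∈ Set.Icc (-1:ℝ) 1, y b - y (-1) = ∫ r in (-1:ℝ)..b, f' r := by
    intro b hb
    have hsub : Set.Icc (-1:ℝ) b ⊆ Set.Icc (-1) 1 := Set.Icc_subset_Icc le_rfl hb.2
    refine (intervalIntegral.integral_eq_sub_of_hasDerivAt_of_le hb.1
      (hy_cont.mono hsub)
      (fun x hx => hy_deriv x ⟨hx.1, lt_of_lt_of_le hx.2 hb.2⟩)
      ((hf'_cont.mono hsub).intervalIntegrable_of_Icc hb.1)).symm
  -- lower bound: y b ≥ p' * ∫ g for b in Icc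
  have hlow : ∀ b ∈ Set.Icc (-1:ℝ) 1,
      p / (p-1) * ∫ s in (-1:ℝ)..b, g s ≤ y b := by
    intro b hb
    have hsub : Set.Icc (-1:ℝ) b ⊆ Set.Icc (-1) 1 := Set.Icc_subset_Icc le_rfl hb.2
    have hgi : IntervalIntegrable (fun s => p/(p-1) * g s) MeasureTheory.volume (-1) b :=
      ((continuousOn_const.mul (hg_cont.mono hsub)).intervalIntegrable_of_Icc hb.1)
    have hfi : IntervalIntegrable f' MeasureTheory.volume (-1) b :=
      ((hf'_cont.mono hsub).intervalIntegrable_of_Icc hb.1)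
    have hmono : (∫ s in (-1:ℝ)..b, p/(p-1) * g s) ≤ ∫ r in (-1:ℝ)..b, f' r := by
      apply intervalIntegral.integral_mono_on hb.1 hgi hfi
      intro x hx
      have : 0 ≤ c * M x := mul_nonneg hc (hM_nonneg x)
      have : p/(p-1) * g x ≤ p/(p-1) * (c * M x + g x) := by nlinarith
      simpa [hf'def] using this
    rw [intervalIntegral.integral_const_mul] at hmono
    have := key b hb
    linarith
  -- y > 0 on Ioo
  have hypos : ∀ r ∈ Set.Ioo (-1:ℝ) 1, 0 < y r := by
    intro r hr
    have h1 := hlow r (Set.Ioo_subset_Icc_self hr)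
    have h2 := hG r hr
    nlinarith
  -- M > 0 on Ioo
  have hMpos : ∀ r ∈ Set.Ioo (-1:ℝ) 1, 0 < M r := by
    intro r hr
    have := hypos r hr
    exact Real.rpow_pos_of_pos (lt_max_of_lt_left this) _
  -- full integral split
  have hMi : IntervalIntegrable M MeasureTheory.volume (-1) 1 :=
    hM_cont.intervalIntegrable_of_Icc (by norm_num)
  have hgi : IntervalIntegrable g MeasureTheory.volume (-1) 1 :=
    hg_cont.intervalIntegrable_of_Icc (by norm_num)
  have hsplit : (∫ r in (-1:ℝ)..1, f' r)
      = p/(p-1) * (c * (∫ r in (-1:ℝ)..1, M r) + ∫ s in (-1:ℝ)..1, g s) := by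
    rw [intervalIntegral.integral_const_mul, intervalIntegral.integral_add
      (hMi.const_mul c) hgi, intervalIntegral.integral_const_mul]
  have hy1 : y 1 = p/(p-1) * (c * (∫ r in (-1:ℝ)..1, M r) + ∫ s in (-1:ℝ)..1, g s) := by
    have := key 1 (by norm_num)
    rw [hy_m1] at this
    linarith [hsplit ▸ this]
  have hMint_nonneg : 0 ≤ ∫ r in (-1:ℝ)..1, M r :=
    intervalIntegral.integral_nonneg (by norm_num) (fun x _ => hM_nonneg x)
  rcases hcase with ⟨hc0, hGpos⟩ | ⟨hcpos, hGnn⟩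
  · have : 0 < y 1 := by rw [hy1, hc0]; positivity
    linarith
  · have hMint_pos : 0 < ∫ r in (-1:ℝ)..1, M r :=
      intervalIntegral.intervalIntegral_pos_of_pos_on hMi hMpos (by norm_num)
    have : 0 < y 1 := by rw [hy1]; positivity
    linarith
end

section
/- Let c ∈ ℝ and let y : [-1,1] → ℝ be a continuously differentiable solution of y'(r) = p'(c·(max(y,0))^{1/p} + g(r)) with y(-1) = 0. Then there exists δ ∈ (0,2) such that y(r) > 0 for all r ∈ (-1, -1+δ). -/
open Set Filter Topology

theorem stmt4 (p c : ℝ) (hp : 1 < p) (g : ℝ → ℝ) (s₀ : ℝ)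
    (hg_cont : ContinuousOn g (Set.Icc (-1) 1))
    (hs₀ : s₀ ∈ Set.Ioo (-1 : ℝ) 1)
    (hgm1 : g (-1) = 0) (hg1 : g 1 = 0) (hgs₀ : g s₀ = 0)
    (hgpos : ∀ s ∈ Set.Ioo (-1 : ℝ) s₀, 0 < g s)
    (hgneg : ∀ s ∈ Set.Ioo s₀ (1 : ℝ), g s < 0)
    (hG : ∀ r ∈ Set.Ioo (-1 : ℝ) 1, 0 < ∫ s in (-1 : ℝ)..r, g s)
    (y : ℝ → ℝ) (hy_cont : ContinuousOn y (Set.Icc (-1) 1))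
    (hy_ode : ∀ r ∈ Set.Ioo (-1 : ℝ) 1,
      HasDerivAt y (p / (p - 1) * (c * (max (y r) 0) ^ (1 / p) + g r)) r)
    (hy_init : y (-1) = 0) :
    ∃ δ : ℝ, 0 < δ ∧ δ < 2 ∧ ∀ r ∈ Set.Ioo (-1 : ℝ) (-1 + δ), 0 < y r := by
  obtain ⟨hs₀1, hs₀2⟩ := hs₀
  refine ⟨s₀ + 1, by linarith, by linarith, ?_⟩
  have hkey : -1 + (s₀ + 1) = s₀ := by ring
  rw [hkey]
  intro r hr
  by_contra h
  push_neg at h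
  -- y attains a minimum on [-1, r]
  have hrlt1 : r < 1 := lt_trans hr.2 hs₀2
  have hsub : Icc (-1 : ℝ) r ⊆ Icc (-1 : ℝ) 1 := Icc_subset_Icc le_rfl hrlt1.le
  have hycont' : ContinuousOn y (Icc (-1) r) := hy_cont.mono hsub
  have hrmem : r ∈ Icc (-1 : ℝ) r := ⟨hr.1.le, le_rfl⟩
  obtain ⟨t, htmem, htmin⟩ := isCompact_Icc.exists_isMinOn ⟨r, hrmem⟩ hycont'
  have htmin' : ∀ s ∈ Icc (-1 : ℝ) r, y t ≤ y s := fun s hs => htmin hs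
  -- reduce to a minimum point in (-1, r]
  obtain ⟨u, hu1, hu2, humin, hyu⟩ :
      ∃ u, -1 < u ∧ u ≤ r ∧ (∀ s ∈ Icc (-1 : ℝ) r, y u ≤ y s) ∧ y u ≤ 0 := by
    rcases eq_or_lt_of_le htmem.1 with heq | hlt
    · -- minimum at -1, value 0, so y r = 0 and r is also a minimum point
      have hyt : y t = 0 := by rw [← heq, hy_init]
      have hyr0 : y r = 0 := le_antisymm h (hyt ▸ htmin' r hrmem)
      exact ⟨r, hr.1, le_rfl, fun s hs => by rw [hyr0, ← hyt]; exact htmin' s hs, hyr0.le⟩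
    · exact ⟨t, hlt, htmem.2, htmin', le_trans (htmin' r hrmem) h⟩
  -- u is in the open interval, derivative at u is positive
  have huIoo : u ∈ Ioo (-1 : ℝ) 1 := ⟨hu1, lt_trans (lt_of_le_of_lt hu2 hr.2) hs₀2⟩
  have hder := hy_ode u huIoo
  have hmax : max (y u) 0 = 0 := max_eq_right hyu
  have hrpow : (max (y u) 0) ^ (1 / p : ℝ) = 0 := by
    rw [hmax]; exact Real.zero_rpow (by positivity)
  have hgu : 0 < g u := hgpos u ⟨hu1, lt_of_le_of_lt hu2 hr.2⟩
  have hdpos : 0 < p / (p - 1) * (c * (max (y u) 0) ^ (1 / p) + g u) := by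
    rw [hrpow, mul_zero, zero_add]
    have : 0 < p / (p - 1) := div_pos (by linarith) (by linarith)
    positivity
  -- slope tends to the positive derivative; pick s ∈ (-1, u) with positive slope
  have hslope := hasDerivAt_iff_tendsto_slope.mp hder
  have hev : ∀ᶠ s in 𝓝[≠] u, 0 < slope y u s :=
    hslope.eventually (eventually_gt_nhds hdpos)
  have hle : 𝓝[<] u ≤ 𝓝[≠] u := nhdsWithin_mono u fun x hx => ne_of_lt hx
  have hev' : ∀ᶠ s in 𝓝[<] u, 0 < slope y u s := hev.filter_mono hle
  have hIoo : Ioo (-1 : ℝ) u ∈ 𝓝[<] u := Ioo_mem_nhdsLT_of_mem ⟨hu1, le_rfl⟩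
  obtain ⟨s, hs1, hs2⟩ := (hev'.and (eventually_of_mem hIoo fun x hx => hx)).exists
  -- contradiction: y s < y u
  have hsu : s - u < 0 := by linarith [hs2.2]
  have : y s - y u < 0 := by
    rw [slope_def_field] at hs1
    rcases div_pos_iff.mp hs1 with ⟨_, hpos⟩ | ⟨hneg, _⟩
    · linarith
    · linarith
  have hsmem : s ∈ Icc (-1 : ℝ) r := ⟨hs2.1.le, by linarith [hs2.2]⟩
  have := humin s hsmem
  linarith
end

section
/- Let c ∈ ℝ and let y : [-1,1] → ℝ be a continuously differentiable solution of y'(r) = p'(c·(max(y,0))^{1/p} + g(r)) with y(-1) = 0 and y(1) ≥ 0. Then y(r) > 0 for all r ∈ (-1,1). -/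
open Set Filter Topology

lemma stmt5_incr_aux {f : ℝ → ℝ} {a b : ℝ} (hab : a ≤ b)
    (hc : ContinuousOn f (Icc a b))
    (hd : ∀ x ∈ Ioo a b, ∃ d, HasDerivAt f d x ∧ 0 ≤ d) :
    f a ≤ f b := by
  rcases eq_or_lt_of_le hab with rfl | _
  · exact le_rfl
  have hmono : MonotoneOn f (Icc a b) := by
    apply monotoneOn_of_deriv_nonneg (convex_Icc a b) hc
    · intro x hx
      rw [interior_Icc] at hx
      obtain ⟨d, hdd, _⟩ := hd x hx
      exact hdd.differentiableAt.differentiableWithinAt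
    · intro x hx
      rw [interior_Icc] at hx
      obtain ⟨d, hdd, hle⟩ := hd x hx
      rw [hdd.deriv]; exact hle
  exact hmono (left_mem_Icc.2 hab) (right_mem_Icc.2 hab) hab

lemma stmt5_decr_aux {f : ℝ → ℝ} {a b : ℝ} (hab : a ≤ b)
    (hc : ContinuousOn f (Icc a b))
    (hd : ∀ x ∈ Ioo a b, ∃ d, HasDerivAt f d x ∧ d ≤ 0) :
    f b ≤ f a := by
  rcases eq_or_lt_of_le hab with rfl | _
  · exact le_rfl
  have hmono : AntitoneOn f (Icc a b) := by
    apply antitoneOn_of_deriv_nonpos (convex_Icc a b) hc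
    · intro x hx
      rw [interior_Icc] at hx
      obtain ⟨d, hdd, _⟩ := hd x hx
      exact hdd.differentiableAt.differentiableWithinAt
    · intro x hx
      rw [interior_Icc] at hx
      obtain ⟨d, hdd, hle⟩ := hd x hx
      rw [hdd.deriv]; exact hle
  exact hmono (left_mem_Icc.2 hab) (right_mem_Icc.2 hab) hab

theorem stmt5 (p c : ℝ) (hp : 1 < p) (g : ℝ → ℝ) (s₀ : ℝ)
    (hg_cont : ContinuousOn g (Set.Icc (-1) 1))
    (hs₀ : s₀ ∈ Set.Ioo (-1 : ℝ) 1)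
    (hgm1 : g (-1) = 0) (hg1 : g 1 = 0) (hgs₀ : g s₀ = 0)
    (hgpos : ∀ s ∈ Set.Ioo (-1 : ℝ) s₀, 0 < g s)
    (hgneg : ∀ s ∈ Set.Ioo s₀ (1 : ℝ), g s < 0)
    (hG : ∀ r ∈ Set.Ioo (-1 : ℝ) 1, 0 < ∫ s in (-1 : ℝ)..r, g s)
    (y : ℝ → ℝ) (hy_cont : ContinuousOn y (Set.Icc (-1) 1))
    (hy_ode : ∀ r ∈ Set.Ioo (-1 : ℝ) 1,
      HasDerivAt y (p / (p - 1) * (c * (max (y r) 0) ^ (1 / p) + g r)) r)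
    (hy_init : y (-1) = 0) (hy_term : 0 ≤ y 1) :
    ∀ r ∈ Set.Ioo (-1 : ℝ) 1, 0 < y r := by
  have hp1 : (0:ℝ) < p - 1 := by linarith
  have hq : 0 < p / (p - 1) := div_pos (by linarith) hp1
  have hM : ∀ r, (0:ℝ) ≤ (max (y r) 0) ^ (1 / p) := fun r =>
    Real.rpow_nonneg (le_max_right _ _) _
  have hgI : ∀ a ∈ Icc (-1:ℝ) 1, ∀ b ∈ Icc (-1:ℝ) 1,
      IntervalIntegrable g MeasureTheory.volume a b := by
    intro a ha b hb
    exact (hg_cont.mono (uIcc_subset_Icc ha hb)).intervalIntegrable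
  have hcontAt : ∀ x ∈ Ioo (-1:ℝ) 1, ContinuousAt g x := fun x hx =>
    hg_cont.continuousAt (Icc_mem_nhds hx.1 hx.2)
  have hGd : ∀ a ∈ Icc (-1:ℝ) 1, ∀ x ∈ Ioo (-1:ℝ) 1,
      HasDerivAt (fun u => ∫ s in a..u, g s) (g x) x := by
    intro a ha x hx
    exact intervalIntegral.integral_hasDerivAt_right
      (hgI a ha x (Ioo_subset_Icc_self hx))
      (ContinuousAt.stronglyMeasurableAtFilter isOpen_Ioo hcontAt x hx) (hcontAt x hx)
  have hGcont : ∀ a ∈ Icc (-1:ℝ) 1, ContinuousOn (fun u => ∫ s in a..u, g s) (Icc a 1) := by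
    intro a ha
    have h2 : MeasureTheory.IntegrableOn g (uIcc a 1) MeasureTheory.volume := by
      rw [uIcc_of_le ha.2]
      exact (hg_cont.mono (Icc_subset_Icc ha.1 le_rfl)).integrableOn_Icc
    have := intervalIntegral.continuousOn_primitive_interval h2
    rwa [uIcc_of_le ha.2] at this
  rcases le_or_gt 0 c with hc | hc
  · -- case 0 ≤ c : y(r) ≥ p' ∫ g > 0
    intro r hr
    have hGpos := hG r hr
    set w : ℝ → ℝ := fun u => y u - p/(p-1) * ∫ s in (-1:ℝ)..u, g s with hw
    have hwc : ContinuousOn w (Icc (-1:ℝ) r) := by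
      apply ContinuousOn.sub
      · exact hy_cont.mono (Icc_subset_Icc le_rfl hr.2.le)
      · exact (continuousOn_const.mul (hGcont (-1) (by norm_num))).mono
          (Icc_subset_Icc le_rfl hr.2.le)
    have hkey : w (-1) ≤ w r := by
      apply stmt5_incr_aux hr.1.le hwc
      intro x hx
      have hx' : x ∈ Ioo (-1:ℝ) 1 := ⟨hx.1, hx.2.trans hr.2⟩
      refine ⟨_, (hy_ode x hx').sub ((hGd (-1) (by norm_num) x hx').const_mul (p/(p-1))), ?_⟩
      have : p/(p-1) * (c * (max (y x) 0) ^ (1/p) + g x) - p/(p-1) * g x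
          = p/(p-1) * c * (max (y x) 0) ^ (1/p) := by ring
      rw [this]
      exact mul_nonneg (mul_nonneg hq.le hc) (hM x)
    have hw0 : w (-1) = 0 := by
      simp [hw, intervalIntegral.integral_same, hy_init]
    have : 0 ≤ y r - p/(p-1) * ∫ s in (-1:ℝ)..r, g s := hw0 ▸ hkey
    nlinarith [mul_pos hq hGpos]
  · -- case c < 0
    have claimR : ∀ t ∈ Ico s₀ (1:ℝ), 0 < y t := by
      intro t ht
      by_contra hcon
      push_neg at hcon
      have htm1 : (-1:ℝ) < t := lt_of_lt_of_le hs₀.1 ht.1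
      have htI : t ∈ Icc (-1:ℝ) 1 := ⟨htm1.le, ht.2.le⟩
      set z : ℝ → ℝ := fun u => y u - p/(p-1) * ∫ s in t..u, g s with hz
      have hzc : ContinuousOn z (Icc t 1) := by
        apply ContinuousOn.sub
        · exact hy_cont.mono (Icc_subset_Icc htI.1 le_rfl)
        · exact continuousOn_const.mul (hGcont t htI)
      have hkey : z 1 ≤ z t := by
        apply stmt5_decr_aux ht.2.le hzc
        intro x hx
        have hx' : x ∈ Ioo (-1:ℝ) 1 := ⟨htm1.trans hx.1, hx.2⟩
        refine ⟨_, (hy_ode x hx').sub ((hGd t htI x hx').const_mul (p/(p-1))), ?_⟩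
        have : p/(p-1) * (c * (max (y x) 0) ^ (1/p) + g x) - p/(p-1) * g x
            = p/(p-1) * c * (max (y x) 0) ^ (1/p) := by ring
        rw [this]
        exact mul_nonpos_of_nonpos_of_nonneg
          (mul_nonpos_of_nonneg_of_nonpos hq.le hc.le) (hM x)
      have hzt : z t = y t := by
        simp [hz, intervalIntegral.integral_same]
      have hIneg : (∫ s in t..1, g s) < 0 := by
        have hpos : 0 < ∫ s in t..1, -g s := by
          apply intervalIntegral.intervalIntegral_pos_of_pos_on ((hgI t htI 1 (by norm_num)).neg)
          · intro x hx
            have : g x < 0 := hgneg x ⟨lt_of_le_of_lt ht.1 hx.1, hx.2⟩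
            simp only [Pi.neg_apply]
            linarith
          · exact ht.2
        rw [intervalIntegral.integral_neg] at hpos
        linarith
      have hz1 : 0 < z 1 := by
        have := mul_pos hq (neg_pos.2 hIneg)
        simp only [hz]
        nlinarith
      rw [hzt] at hkey
      linarith
    have claimL : ∀ t ∈ Ioo (-1:ℝ) s₀, 0 < y t := by
      intro t ht
      by_contra hcon
      push_neg at hcon
      have ht1 : t < 1 := ht.2.trans hs₀.2
      have htI : Icc (-1:ℝ) t ⊆ Icc (-1:ℝ) 1 := Icc_subset_Icc le_rfl ht1.le
      obtain ⟨r₁, hr₁mem, hr₁min⟩ : ∃ r₁ ∈ Ioc (-1:ℝ) t, ∀ u ∈ Icc (-1:ℝ) t, y r₁ ≤ y u := by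
        obtain ⟨rs, hrs, hmin⟩ := (isCompact_Icc : IsCompact (Icc (-1:ℝ) t)).exists_isMinOn
          (nonempty_Icc.2 ht.1.le) (hy_cont.mono htI)
        rcases eq_or_lt_of_le hrs.1 with heq | hlt
        · refine ⟨t, ⟨ht.1, le_rfl⟩, fun u hu => ?_⟩
          have h0 : y rs = 0 := by rw [← heq]; exact hy_init
          calc y t ≤ 0 := hcon
            _ = y rs := h0.symm
            _ ≤ y u := isMinOn_iff.mp hmin u hu
        · exact ⟨rs, ⟨hlt, hrs.2⟩, fun u hu => isMinOn_iff.mp hmin u hu⟩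
      have hr₁Ioo : r₁ ∈ Ioo (-1:ℝ) 1 := ⟨hr₁mem.1, lt_of_le_of_lt hr₁mem.2 ht1⟩
      have hy₁ : y r₁ ≤ 0 :=
        le_trans (hr₁min t ⟨ht.1.le, le_rfl⟩) hcon
      have hmax : max (y r₁) 0 = 0 := max_eq_right hy₁
      have hgr₁ : 0 < g r₁ := hgpos r₁ ⟨hr₁mem.1, lt_of_le_of_lt hr₁mem.2 ht.2⟩
      have hderiv := hy_ode r₁ hr₁Ioo
      rw [hmax, Real.zero_rpow (by positivity : (1:ℝ)/p ≠ 0), mul_zero, zero_add] at hderiv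
      have hdpos : 0 < p/(p-1) * g r₁ := mul_pos hq hgr₁
      have hslope := hasDerivAt_iff_tendsto_slope.mp hderiv
      have hev : ∀ᶠ u in 𝓝[<] r₁, 0 < slope y r₁ u := by
        have hle : 𝓝[<] r₁ ≤ 𝓝[≠] r₁ :=
          nhdsWithin_mono _ (fun u hu => ne_of_lt hu)
        exact (hslope.mono_left hle).eventually (eventually_gt_nhds hdpos)
      have hev2 : ∀ᶠ u in 𝓝[<] r₁, u ∈ Ioo (-1:ℝ) r₁ :=
        Ioo_mem_nhdsLT_of_mem ⟨hr₁mem.1, le_rfl⟩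
      obtain ⟨u, hu1, hu2⟩ := (hev.and hev2).exists
      have hlt : y u < y r₁ := by
        rw [slope_def_field] at hu1
        rcases div_pos_iff.mp hu1 with ⟨h1, h2⟩ | ⟨h1, h2⟩
        · linarith [hu2.2]
        · linarith
      have : y r₁ ≤ y u := hr₁min u ⟨hu2.1.le, hu2.2.le.trans hr₁mem.2⟩
      linarith
    intro r hr
    rcases lt_or_ge r s₀ with h | h
    · exact claimL r ⟨hr.1, h⟩
    · exact claimR r ⟨h, hr.2⟩
end

section
/- Let c < 0 and let y : [-1,1] → ℝ be a continuously differentiable solution of y'(r) = p'(c·(max(y,0))^{1/p} + g(r)) with y(-1) = 0, y(r₀) = 0 for some r₀ ∈ (-1,1), and y(r) > 0 for all r ∈ (-1,r₀). Then r₀ ≥ s₀ and y(r) < 0 for all r ∈ (r₀, 1]. -/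
open Set Filter Topology

theorem stmt6 (p c : ℝ) (hp : 1 < p) (hc : c < 0) (g : ℝ → ℝ) (s₀ : ℝ)
    (hg_cont : ContinuousOn g (Set.Icc (-1) 1))
    (hs₀ : s₀ ∈ Set.Ioo (-1 : ℝ) 1)
    (hgm1 : g (-1) = 0) (hg1 : g 1 = 0) (hgs₀ : g s₀ = 0)
    (hgpos : ∀ s ∈ Set.Ioo (-1 : ℝ) s₀, 0 < g s)
    (hgneg : ∀ s ∈ Set.Ioo s₀ (1 : ℝ), g s < 0)
    (hG : ∀ r ∈ Set.Ioo (-1 : ℝ) 1, 0 < ∫ s in (-1 : ℝ)..r, g s)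
    (y : ℝ → ℝ) (hy_cont : ContinuousOn y (Set.Icc (-1) 1))
    (hy_ode : ∀ r ∈ Set.Ioo (-1 : ℝ) 1,
      HasDerivAt y (p / (p - 1) * (c * (max (y r) 0) ^ (1 / p) + g r)) r)
    (hy_init : y (-1) = 0)
    (r₀ : ℝ) (hr₀ : r₀ ∈ Set.Ioo (-1 : ℝ) 1) (hyr₀ : y r₀ = 0)
    (hy_pos : ∀ r ∈ Set.Ioo (-1 : ℝ) r₀, 0 < y r) :
    s₀ ≤ r₀ ∧ ∀ r ∈ Set.Ioc r₀ (1 : ℝ), y r < 0 := by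
  have hp' : 0 < p / (p - 1) := div_pos (by linarith) (by linarith)
  have hr₀1 : s₀ ≤ r₀ := by
    by_contra h
    push_neg at h
    have hg0 : 0 < g r₀ := hgpos r₀ ⟨hr₀.1, h⟩
    have hd := hy_ode r₀ hr₀
    rw [hyr₀, max_self, Real.zero_rpow (by positivity : (1:ℝ)/p ≠ 0), mul_zero,
      zero_add] at hd
    have hdpos : 0 < p / (p - 1) * g r₀ := mul_pos hp' hg0
    have hslope := hasDerivAt_iff_tendsto_slope.mp hd
    have hev : ∀ᶠ r in 𝓝[<] r₀, 0 < slope y r₀ r :=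
      (hslope.mono_left (nhdsWithin_mono _ fun x hx => ne_of_lt hx)).eventually
        (eventually_gt_nhds hdpos)
    have hmem : Ioo (-1 : ℝ) r₀ ∈ 𝓝[<] r₀ := Ioo_mem_nhdsLT_of_mem ⟨hr₀.1, le_rfl⟩
    obtain ⟨r, hr1, hr2⟩ := (hev.and (eventually_of_mem hmem fun x hx => hx)).exists
    have hslope_val : slope y r₀ r = y r / (r - r₀) := by
      simp [slope_def_field, hyr₀, div_eq_div_iff]
    rw [hslope_val] at hr1
    have hypos := hy_pos r hr2
    have : r - r₀ < 0 := by linarith [hr2.2]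
    nlinarith [div_neg_of_pos_of_neg hypos this]
  refine ⟨hr₀1, ?_⟩
  have hanti : StrictAntiOn y (Icc r₀ 1) := by
    apply StrictAntiOn.mono ?_ (le_refl (Icc r₀ 1))
    apply strictAntiOn_of_deriv_neg (convex_Icc _ _)
      (hy_cont.mono (Icc_subset_Icc (le_of_lt hr₀.1) le_rfl))
    intro x hx
    rw [interior_Icc] at hx
    have hx' : x ∈ Ioo (-1 : ℝ) 1 := ⟨lt_trans hr₀.1 hx.1, hx.2⟩
    have hd := hy_ode x hx'
    rw [hd.deriv]
    have hgx : g x < 0 := hgneg x ⟨lt_of_le_of_lt hr₀1 hx.1, hx.2⟩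
    have hmax : 0 ≤ (max (y x) 0) ^ (1 / p) := Real.rpow_nonneg (le_max_right _ _) _
    have hcle : c * (max (y x) 0) ^ (1 / p) ≤ 0 :=
      mul_nonpos_of_nonpos_of_nonneg (le_of_lt hc) hmax
    exact mul_neg_of_pos_of_neg hp' (by linarith)
  intro r hr
  have := hanti ⟨le_rfl, le_of_lt hr₀.2⟩ ⟨le_of_lt hr.1, hr.2⟩ hr.1
  rwa [hyr₀] at this
end

section
/- Let c ≤ 0, -1 ≤ a < b ≤ 1, and let y₁, y₂ : [a,b] → ℝ be continuously differentiable with y₁'(r) ≤ p'(c·(max(y₁,0))^{1/p} + g(r)) and y₂'(r) ≥ p'(c·(max(y₂,0))^{1/p} + g(r)) on (a,b). If y₁(a) ≤ y₂(a), then y₁(r) ≤ y₂(r) for all r ∈ [a,b]. -/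
open Set Filter

theorem stmt7 (p c a b : ℝ) (hp : 1 < p) (hc : c ≤ 0)
    (ha : -1 ≤ a) (hab : a < b) (hb : b ≤ 1)
    (g : ℝ → ℝ) (hg_cont : ContinuousOn g (Set.Icc (-1) 1))
    (y₁ y₂ : ℝ → ℝ)
    (hy₁_cont : ContinuousOn y₁ (Set.Icc a b))
    (hy₂_cont : ContinuousOn y₂ (Set.Icc a b))
    (hy₁_sub : ∀ r ∈ Set.Ioo a b, ∃ d₁ : ℝ, HasDerivAt y₁ d₁ r ∧
      d₁ ≤ p / (p - 1) * (c * (max (y₁ r) 0) ^ (1 / p) + g r))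
    (hy₂_sup : ∀ r ∈ Set.Ioo a b, ∃ d₂ : ℝ, HasDerivAt y₂ d₂ r ∧
      p / (p - 1) * (c * (max (y₂ r) 0) ^ (1 / p) + g r) ≤ d₂)
    (hinit : y₁ a ≤ y₂ a) :
    ∀ r ∈ Set.Icc a b, y₁ r ≤ y₂ r := by
  have hp' : (0:ℝ) < p / (p - 1) := div_pos (by linarith) (by linarith)
  set w : ℝ → ℝ := fun r => y₁ r - y₂ r with hw
  set φ : ℝ → ℝ := fun r =>
    p / (p - 1) * (c * (max (y₁ r) 0) ^ (1 / p) + g r) -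
      p / (p - 1) * (c * (max (y₂ r) 0) ^ (1 / p) + g r) with hφ
  have hw_cont : ContinuousOn w (Icc a b) := hy₁_cont.sub hy₂_cont
  have hgc : ContinuousOn g (Icc a b) := hg_cont.mono (Icc_subset_Icc ha hb)
  have hrpow : ∀ (y : ℝ → ℝ), ContinuousOn y (Icc a b) →
      ContinuousOn (fun r => c * (max (y r) 0) ^ (1 / p) + g r) (Icc a b) := by
    intro y hy
    refine (continuousOn_const.mul (ContinuousOn.rpow_const
      (hy.sup continuousOn_const) ?_)).add hgc
    intro x _
    exact Or.inr (by positivity)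
  have hφ_cont : ContinuousOn φ (Icc a b) :=
    (continuousOn_const.mul (hrpow y₁ hy₁_cont)).sub
      (continuousOn_const.mul (hrpow y₂ hy₂_cont))
  obtain ⟨M, hM⟩ := isCompact_Icc.exists_bound_of_continuousOn hφ_cont
  -- key derivative fact
  have key : ∀ x ∈ Ioo a b, ∃ d, HasDerivAt w d x ∧ d ≤ φ x := by
    intro x hx
    obtain ⟨d₁, hd₁, hd₁le⟩ := hy₁_sub x hx
    obtain ⟨d₂, hd₂, hd₂le⟩ := hy₂_sup x hx
    exact ⟨d₁ - d₂, hd₁.sub hd₂, by simp only [hφ]; linarith⟩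
  choose! D hD hDle using key
  set D' : ℝ → ℝ := fun x => if h : x ∈ Ioo a b then D x else M with hD'
  have hD'le : ∀ x ∈ Ioo a b, D' x ≤ φ x := by
    intro x hx; simp only [hD', dif_pos hx]; exact hDle x hx
  have hD'deriv : ∀ x ∈ Ioo a b, HasDerivAt w (D' x) x := by
    intro x hx; simp only [hD', dif_pos hx]; exact hD x hx
  have φleM : ∀ x ∈ Icc a b, φ x ≤ M := fun x hx =>
    (le_abs_self _).trans (by simpa using hM x hx)
  have slope_le : ∀ z ∈ Ioo a b, slope w a z ≤ M := by
    intro z hz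
    obtain ⟨ξ, hξ, hξeq⟩ := exists_hasDerivAt_eq_slope w D' hz.1
      (hw_cont.mono (Icc_subset_Icc le_rfl hz.2.le))
      (fun x hx => hD'deriv x ⟨hx.1, hx.2.trans hz.2⟩)
    have hξm : ξ ∈ Ioo a b := ⟨hξ.1, hξ.2.trans hz.2⟩
    rw [slope_def_field, ← hξeq]
    exact (hD'le ξ hξm).trans (φleM ξ (Ioo_subset_Icc_self hξm))
  -- main step with perturbation
  have step : ∀ ε > 0, ∀ r ∈ Icc a b, w r ≤ ε * (r - a) + ε := by
    intro ε hε
    have := image_le_of_liminf_slope_right_lt_deriv_boundary'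
      (f := w) (f' := D') (a := a) (b := b) (B := fun x => ε * (x - a) + ε)
      (B' := fun _ => ε) hw_cont ?_ ?_ ?_ ?_ ?_
    · exact fun r hr => this hr
    · -- hf'
      intro x hx r hr
      rcases eq_or_lt_of_le hx.1 with h | h
      · -- x = a
        have hDa : D' x = M := by
          simp only [hD', dif_neg (fun hmem : x ∈ Ioo a b => absurd hmem.1 (by rw [← h]; exact lt_irrefl _))]
        rw [hDa] at hr
        apply Filter.Eventually.frequently
        filter_upwards [Ioo_mem_nhdsGT_of_mem ⟨le_rfl, hx.2⟩] with z hz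
        subst h
        exact lt_of_le_of_lt (slope_le z hz) hr
      · exact (hD'deriv x ⟨h, hx.2⟩).hasDerivWithinAt.liminf_right_slope_le hr
    · -- w a ≤ B a
      simp only [hw, sub_self, mul_zero, zero_add]
      linarith
    · -- continuity of B
      exact (continuousOn_const.mul (continuousOn_id.sub continuousOn_const)).add
        continuousOn_const
    · -- derivative of B
      intro x _
      simpa using (((hasDerivWithinAt_id x (Ici x)).sub_const a).const_mul ε).add_const ε
    · -- bound
      intro x hx hwx
      rcases eq_or_lt_of_le hx.1 with h | h
      · exfalso
        rw [← h] at hwx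
        simp only [hw, sub_self, mul_zero, zero_add] at hwx
        linarith
      · have hxm : x ∈ Ioo a b := ⟨h, hx.2⟩
        have hwx' : y₁ x - y₂ x = ε * (x - a) + ε := hwx
        have hy12 : y₂ x ≤ y₁ x := by nlinarith [hx.1]
        have hA : (max (y₂ x) 0) ^ (1/p) ≤ (max (y₁ x) 0) ^ (1/p) :=
          Real.rpow_le_rpow (le_max_right _ _) (max_le_max hy12 le_rfl) (by positivity)
        have hφle : φ x ≤ 0 := by
          simp only [hφ]
          have h1 : c * (max (y₁ x) 0) ^ (1/p) ≤ c * (max (y₂ x) 0) ^ (1/p) :=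
            mul_le_mul_of_nonpos_left hA hc
          nlinarith
        exact lt_of_le_of_lt ((hD'le x hxm).trans hφle) hε
  -- conclude
  intro r hr
  have h2 : ∀ ε > 0, y₁ r - y₂ r ≤ ε * ((b - a) + 1) := by
    intro ε hε
    have := step ε hε r hr
    simp only [hw] at this
    nlinarith [hr.1, hr.2]
  by_contra h
  push_neg at h
  have hK : (0:ℝ) < (b - a) + 1 := by linarith
  have hε : (0:ℝ) < (y₁ r - y₂ r) / (2 * ((b - a) + 1)) :=
    div_pos (by linarith) (by linarith)
  have h3 := h2 _ hε
  have heq : (y₁ r - y₂ r) / (2 * ((b - a) + 1)) * ((b - a) + 1) = (y₁ r - y₂ r) / 2 := by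
    field_simp
  rw [heq] at h3
  linarith
end

section
/- Let c ≥ 0, -1 ≤ a < b ≤ 1, and let y₁, y₂ : [a,b] → ℝ be continuously differentiable with y₁'(r) ≤ p'(c·(max(y₁,0))^{1/p} + g(r)) and y₂'(r) ≥ p'(c·(max(y₂,0))^{1/p} + g(r)) on (a,b). If y₁(b) ≥ y₂(b), then y₁(r) ≥ y₂(r) for all r ∈ [a,b]. -/
open Set Filter

theorem stmt8 (p c a b : ℝ) (hp : 1 < p) (hc : 0 ≤ c)
    (ha : -1 ≤ a) (hab : a < b) (hb : b ≤ 1)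
    (g : ℝ → ℝ) (hg_cont : ContinuousOn g (Set.Icc (-1) 1))
    (y₁ y₂ : ℝ → ℝ)
    (hy₁_cont : ContinuousOn y₁ (Set.Icc a b))
    (hy₂_cont : ContinuousOn y₂ (Set.Icc a b))
    (hy₁_sub : ∀ r ∈ Set.Ioo a b, ∃ d₁ : ℝ, HasDerivAt y₁ d₁ r ∧
      d₁ ≤ p / (p - 1) * (c * (max (y₁ r) 0) ^ (1 / p) + g r))
    (hy₂_sup : ∀ r ∈ Set.Ioo a b, ∃ d₂ : ℝ, HasDerivAt y₂ d₂ r ∧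
      p / (p - 1) * (c * (max (y₂ r) 0) ^ (1 / p) + g r) ≤ d₂)
    (hterm : y₂ b ≤ y₁ b) :
    ∀ r ∈ Set.Icc a b, y₂ r ≤ y₁ r := by
  set u : ℝ → ℝ := fun r => y₂ r - y₁ r with hu
  have hu_cont : ContinuousOn u (Set.Icc a b) := hy₂_cont.sub hy₁_cont
  intro r₀ hr₀
  by_contra hpos
  push_neg at hpos
  have hur₀ : 0 < u r₀ := by simp [hu]; linarith
  have hr₀b : r₀ < b := by
    rcases lt_or_eq_of_le hr₀.2 with h | h
    · exact h
    · exfalso; rw [h] at hpos; linarith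
  -- the set of points in [r₀, b] where u ≤ 0
  set S : Set ℝ := (Set.Icc a b ∩ u ⁻¹' Set.Iic 0) ∩ Set.Icc r₀ b with hS
  have hSclosed : IsClosed S :=
    (hu_cont.preimage_isClosed_of_isClosed isClosed_Icc isClosed_Iic).inter isClosed_Icc
  have hbS : b ∈ S := by
    refine ⟨⟨⟨le_of_lt hab, le_refl b⟩, ?_⟩, ⟨le_of_lt hr₀b, le_refl b⟩⟩
    simp [hu]; linarith
  have hSne : S.Nonempty := ⟨b, hbS⟩
  have hSbdd : BddBelow S := ⟨r₀, fun x hx => hx.2.1⟩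
  set s := sInf S with hs
  have hsS : s ∈ S := hSclosed.csInf_mem hSne hSbdd
  have hus : u s ≤ 0 := hsS.1.2
  have hr₀s : r₀ < s := by
    rcases lt_or_eq_of_le hsS.2.1 with h | h
    · exact h
    · exfalso; rw [← h] at hus; linarith
  have hsb : s ≤ b := hsS.2.2
  have har₀ : a ≤ r₀ := hr₀.1
  -- u is positive on [r₀, s)
  have hup : ∀ x ∈ Set.Ico r₀ s, 0 < u x := by
    intro x hx
    by_contra h
    push_neg at h
    have hxS : x ∈ S := ⟨⟨⟨le_trans har₀ hx.1, le_trans (le_of_lt hx.2) hsb⟩, h⟩,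
      ⟨hx.1, le_trans (le_of_lt hx.2) hsb⟩⟩
    exact absurd (csInf_le hSbdd hxS) (not_le.mpr hx.2)
  -- u is monotone on [r₀, s]
  have hmono : MonotoneOn u (Set.Icc r₀ s) := by
    have hsub : Set.Icc r₀ s ⊆ Set.Icc a b :=
      Set.Icc_subset_Icc har₀ hsb
    have hder : ∀ x ∈ Set.Ioo r₀ s, ∃ d : ℝ, HasDerivAt u d x ∧ 0 ≤ d := by
      intro x hx
      have hxab : x ∈ Set.Ioo a b := ⟨lt_of_le_of_lt har₀ hx.1, lt_of_lt_of_le hx.2 hsb⟩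
      obtain ⟨d₁, hd₁, hd₁le⟩ := hy₁_sub x hxab
      obtain ⟨d₂, hd₂, hd₂ge⟩ := hy₂_sup x hxab
      refine ⟨d₂ - d₁, hd₂.sub hd₁, ?_⟩
      have hux : 0 < u x := hup x ⟨le_of_lt hx.1, hx.2⟩
      have hyle : y₁ x ≤ y₂ x := by simp [hu] at hux; linarith
      have hmax : max (y₁ x) 0 ≤ max (y₂ x) 0 := max_le_max hyle (le_refl 0)
      have hrpow : (max (y₁ x) 0) ^ (1 / p) ≤ (max (y₂ x) 0) ^ (1 / p) :=
        Real.rpow_le_rpow (le_max_right _ _) hmax (by positivity)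
      have hp' : 0 < p / (p - 1) := by
        apply div_pos (by linarith) (by linarith)
      have : p / (p - 1) * (c * (max (y₁ x) 0) ^ (1 / p) + g x) ≤
          p / (p - 1) * (c * (max (y₂ x) 0) ^ (1 / p) + g x) := by
        apply mul_le_mul_of_nonneg_left _ (le_of_lt hp')
        have := mul_le_mul_of_nonneg_left hrpow hc
        linarith
      linarith
    apply monotoneOn_of_deriv_nonneg (convex_Icc r₀ s) (hu_cont.mono hsub)
    · intro x hx
      rw [interior_Icc] at hx
      obtain ⟨d, hd, _⟩ := hder x hx
      exact hd.differentiableAt.differentiableWithinAt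
    · intro x hx
      rw [interior_Icc] at hx
      obtain ⟨d, hd, hdnn⟩ := hder x hx
      rw [hd.deriv]
      exact hdnn
  have := hmono ⟨le_refl r₀, le_of_lt hr₀s⟩ ⟨le_of_lt hr₀s, le_refl s⟩ (le_of_lt hr₀s)
  linarith
end

section
/- Let -∞ < c₁ ≤ c₂ ≤ 0 and let y₁, y₂ : [-1,1] → ℝ be continuously differentiable solutions of yᵢ'(r) = p'(cᵢ·(max(yᵢ,0))^{1/p} + g(r)) with yᵢ(-1) = 0 (i=1,2). Then y₁(r) ≤ y₂(r) for all r ∈ [-1,1]; in particular c ↦ y_c(1) is monotone increasing on (-∞,0]. -/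
open Set Filter

theorem stmt10 (p c₁ c₂ : ℝ) (hp : 1 < p) (hc₁₂ : c₁ ≤ c₂) (hc₂ : c₂ ≤ 0)
    (g : ℝ → ℝ) (hg_cont : ContinuousOn g (Set.Icc (-1) 1))
    (y₁ y₂ : ℝ → ℝ)
    (hy₁_cont : ContinuousOn y₁ (Set.Icc (-1) 1))
    (hy₂_cont : ContinuousOn y₂ (Set.Icc (-1) 1))
    (hy₁_ode : ∀ r ∈ Set.Ioo (-1 : ℝ) 1,
      HasDerivAt y₁ (p / (p - 1) * (c₁ * (max (y₁ r) 0) ^ (1 / p) + g r)) r)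
    (hy₂_ode : ∀ r ∈ Set.Ioo (-1 : ℝ) 1,
      HasDerivAt y₂ (p / (p - 1) * (c₂ * (max (y₂ r) 0) ^ (1 / p) + g r)) r)
    (hy₁_init : y₁ (-1) = 0) (hy₂_init : y₂ (-1) = 0) :
    ∀ r ∈ Set.Icc (-1 : ℝ) 1, y₁ r ≤ y₂ r := by
  intro r₀ hr₀
  by_contra hcon
  push_neg at hcon
  have hr₀1 : (-1:ℝ) ≤ r₀ := hr₀.1
  have hr₀2 : r₀ ≤ 1 := hr₀.2
  set w : ℝ → ℝ := fun r => y₁ r - y₂ r with hw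
  have hwcont : ContinuousOn w (Set.Icc (-1:ℝ) 1) := hy₁_cont.sub hy₂_cont
  set S := {r | r ∈ Set.Icc (-1:ℝ) r₀ ∧ w r ≤ 0} with hS
  have hSne : S.Nonempty := ⟨-1, ⟨le_refl _, hr₀1⟩, by simp [hw, hy₁_init, hy₂_init]⟩
  have hSbdd : BddAbove S := ⟨r₀, fun x hx => hx.1.2⟩
  have hSclosed : IsClosed S := by
    have hEq : S = Set.Icc (-1:ℝ) r₀ ∩ w ⁻¹' Set.Iic 0 := by
      rfl
    rw [hEq]
    exact (hwcont.mono (Set.Icc_subset_Icc le_rfl hr₀2)).preimage_isClosed_of_isClosed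
      isClosed_Icc isClosed_Iic
  set s := sSup S with hs
  have hsS : s ∈ S := hSclosed.csSup_mem hSne hSbdd
  have hs1 : (-1:ℝ) ≤ s := hsS.1.1
  have hsr₀ : s < r₀ := by
    rcases lt_or_eq_of_le hsS.1.2 with h | h
    · exact h
    · exfalso; have := hsS.2; rw [h] at this; simp only [hw] at this; linarith
  have hpos : ∀ r ∈ Set.Ioc s r₀, 0 < w r := by
    intro r hr
    by_contra hle
    push_neg at hle
    have hrS : r ∈ S := ⟨⟨le_trans hs1 hr.1.le, hr.2⟩, hle⟩
    exact absurd (le_csSup hSbdd hrS) (not_le.mpr hr.1)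
  have hK : 0 < p / (p - 1) := div_pos (by linarith) (by linarith)
  have hanti : AntitoneOn w (Set.Icc s r₀) := by
    apply antitoneOn_of_deriv_nonpos (convex_Icc s r₀)
      (hwcont.mono (Set.Icc_subset_Icc hs1 hr₀2))
    · intro x hx
      rw [interior_Icc] at hx
      have hx' : x ∈ Set.Ioo (-1:ℝ) 1 := ⟨lt_of_le_of_lt hs1 hx.1, lt_of_lt_of_le hx.2 hr₀2⟩
      exact ((hy₁_ode x hx').sub (hy₂_ode x hx')).differentiableAt.differentiableWithinAt
    · intro x hx
      rw [interior_Icc] at hx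
      have hx' : x ∈ Set.Ioo (-1:ℝ) 1 := ⟨lt_of_le_of_lt hs1 hx.1, lt_of_lt_of_le hx.2 hr₀2⟩
      have hd := ((hy₁_ode x hx').sub (hy₂_ode x hx')).deriv
      have hwx : 0 < w x := hpos x ⟨hx.1, hx.2.le⟩
      have hyx : y₂ x ≤ y₁ x := by simp only [hw] at hwx; linarith
      have hMle : (max (y₂ x) 0) ^ (1/p) ≤ (max (y₁ x) 0) ^ (1/p) :=
        Real.rpow_le_rpow (le_max_right _ _) (max_le_max hyx le_rfl)
          (by positivity)
      have hM₁ : (0:ℝ) ≤ (max (y₁ x) 0) ^ (1/p) :=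
        Real.rpow_nonneg (le_max_right _ _) _
      have h1 : c₁ * (max (y₁ x) 0) ^ (1/p) ≤ c₂ * (max (y₁ x) 0) ^ (1/p) :=
        mul_le_mul_of_nonneg_right hc₁₂ hM₁
      have h2 : c₂ * (max (y₁ x) 0) ^ (1/p) ≤ c₂ * (max (y₂ x) 0) ^ (1/p) :=
        mul_le_mul_of_nonpos_left hMle hc₂
      have : deriv w x = p / (p - 1) * (c₁ * (max (y₁ x) 0) ^ (1/p) + g x)
          - p / (p - 1) * (c₂ * (max (y₂ x) 0) ^ (1/p) + g x) := hd
      rw [this]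
      nlinarith [hK]
  have hle : w r₀ ≤ w s := hanti ⟨le_rfl, hsr₀.le⟩ ⟨hsr₀.le, le_rfl⟩ hsr₀.le
  have := hsS.2
  simp only [hw] at hle this
  linarith
end

section
/- The set {c ∈ (-∞,0) : y_c(1) > 0} is bounded below; consequently c* := inf{c ∈ ℝ : y_c(1) > 0} satisfies -∞ < c* < 0 and, by continuity and monotonicity of c ↦ y_c(1), y_{c*}(1) = 0. -/
open Set Filter

/-- A continuous function on `[x₀, x₁]` with nonpositive derivative on the interior
is antitone there. -/
lemma stmt12_auxAnti {f f' : ℝ → ℝ} {x₀ x₁ : ℝ} (hc : ContinuousOn f (Set.Icc x₀ x₁))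
    (hd : ∀ x ∈ Set.Ioo x₀ x₁, HasDerivAt f (f' x) x)
    (hn : ∀ x ∈ Set.Ioo x₀ x₁, f' x ≤ 0) : AntitoneOn f (Set.Icc x₀ x₁) := by
  apply antitoneOn_of_deriv_nonpos (convex_Icc _ _) hc
  · rw [interior_Icc]
    exact fun x hx => (hd x hx).differentiableAt.differentiableWithinAt
  · rw [interior_Icc]
    intro x hx
    rw [(hd x hx).deriv]
    exact hn x hx

theorem stmt12 (p : ℝ) (hp : 1 < p) (g : ℝ → ℝ) (s₀ : ℝ)
    (hg_cont : ContinuousOn g (Set.Icc (-1) 1))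
    (hs₀ : s₀ ∈ Set.Ioo (-1 : ℝ) 1)
    (hgm1 : g (-1) = 0) (hg1 : g 1 = 0) (hgs₀ : g s₀ = 0)
    (hgpos : ∀ s ∈ Set.Ioo (-1 : ℝ) s₀, 0 < g s)
    (hgneg : ∀ s ∈ Set.Ioo s₀ (1 : ℝ), g s < 0)
    (hG : ∀ r ∈ Set.Ioo (-1 : ℝ) 1, 0 < ∫ s in (-1 : ℝ)..r, g s)
    (hG1 : 0 < ∫ s in (-1 : ℝ)..1, g s)
    (Y : ℝ → ℝ → ℝ)
    (hY_cont : ∀ c : ℝ, c ≤ 0 → ContinuousOn (Y c) (Set.Icc (-1) 1))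
    (hY_ode : ∀ c : ℝ, c ≤ 0 → ∀ r ∈ Set.Ioo (-1 : ℝ) 1,
      HasDerivAt (Y c) (p / (p - 1) * (c * (max (Y c r) 0) ^ (1 / p) + g r)) r)
    (hY_init : ∀ c : ℝ, c ≤ 0 → Y c (-1) = 0)
    (hY_pos : ∀ c : ℝ, 0 < c → 0 < Y c 1)
    (hY1_cont : ContinuousOn (fun c : ℝ => Y c 1) (Set.Iic 0))
    (hY1_mono : ∀ c₁ c₂ : ℝ, c₁ ≤ c₂ → c₂ ≤ 0 → Y c₁ 1 ≤ Y c₂ 1) :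
    BddBelow {c : ℝ | c < 0 ∧ 0 < Y c 1} ∧
    (sInf {c : ℝ | 0 < Y c 1} < 0 ∧
     ∃ cstar : ℝ, IsGLB {c : ℝ | 0 < Y c 1} cstar ∧ cstar < 0 ∧
       Y cstar 1 = 0) := by
  have hp0 : (0 : ℝ) < p := by linarith
  have hp1 : (0 : ℝ) < p - 1 := by linarith
  have hp' : (0 : ℝ) < p / (p - 1) := div_pos hp0 hp1
  -- the exponent e = (p-1)/p
  set e : ℝ := (p - 1) / p with he_def
  have he : 0 < e := div_pos hp1 hp0
  have he1 : e * (p / (p - 1)) = 1 := by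
    rw [he_def]; field_simp
  have hexp : (1 : ℝ) / p + (e - 1) = 0 := by
    rw [he_def]; field_simp; ring
  -- the midpoint a
  set a : ℝ := (s₀ + 1) / 2 with ha_def
  have has₀ : s₀ < a := by rw [ha_def]; linarith [hs₀.2]
  have ha1 : a < 1 := by rw [ha_def]; linarith [hs₀.2]
  have ham1 : (-1 : ℝ) < a := by rw [ha_def]; linarith [hs₀.1]
  set Ga : ℝ := ∫ s in (-1 : ℝ)..a, g s with hGa_def
  have hGa : 0 < Ga := hG a ⟨ham1, ha1⟩
  -- interval integrability of g
  have hgi : ∀ r ∈ Set.Icc (-1 : ℝ) 1, IntervalIntegrable g MeasureTheory.volume (-1) r := by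
    intro r hr
    apply ContinuousOn.intervalIntegrable
    apply hg_cont.mono
    rw [Set.uIcc_of_le hr.1]
    exact Set.Icc_subset_Icc le_rfl hr.2
  -- measurability at filter
  have hgmeas : ∀ x ∈ Set.Ioo (-1 : ℝ) 1,
      StronglyMeasurableAtFilter g (nhds x) MeasureTheory.volume :=
    ContinuousOn.stronglyMeasurableAtFilter isOpen_Ioo
      (hg_cont.mono Set.Ioo_subset_Icc_self)
  have hgcontAt : ∀ x ∈ Set.Ioo (-1 : ℝ) 1, ContinuousAt g x := fun x hx =>
    hg_cont.continuousAt (Icc_mem_nhds hx.1 hx.2)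
  -- FTC-1: derivative of the primitive of g
  have hFTC : ∀ x ∈ Set.Ioo (-1 : ℝ) 1,
      HasDerivAt (fun u => ∫ s in (-1 : ℝ)..u, g s) (g x) x := by
    intro x hx
    exact intervalIntegral.integral_hasDerivAt_right (hgi x (Set.Ioo_subset_Icc_self hx))
      (hgmeas x hx) (hgcontAt x hx)
  -- continuity of the primitive
  have hPrim_cont : ContinuousOn (fun u => ∫ s in (-1 : ℝ)..u, g s) (Set.Icc (-1 : ℝ) 1) := by
    have := intervalIntegral.continuousOn_primitive_interval
      (f := g) (μ := MeasureTheory.volume) (a := (-1 : ℝ)) (b := 1)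
      (by rw [Set.uIcc_of_le (by norm_num : (-1 : ℝ) ≤ 1)]
          exact hg_cont.integrableOn_Icc)
    rwa [Set.uIcc_of_le (by norm_num : (-1 : ℝ) ≤ 1)] at this
  -- Lemma A: upper bound Y c r ≤ (p/(p-1)) * ∫_{-1}^r g
  have hYle : ∀ c : ℝ, c ≤ 0 → ∀ r ∈ Set.Icc (-1 : ℝ) 1,
      Y c r ≤ p / (p - 1) * ∫ s in (-1 : ℝ)..r, g s := by
    intro c hc r hr
    have hanti : AntitoneOn (fun x => Y c x - p / (p - 1) * ∫ s in (-1 : ℝ)..x, g s)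
        (Set.Icc (-1 : ℝ) 1) := by
      apply stmt12_auxAnti
        (f' := fun x => p / (p - 1) * (c * (max (Y c x) 0) ^ ((1 : ℝ) / p)))
      · exact (hY_cont c hc).sub (hPrim_cont.const_smul (p / (p - 1)))
      · intro x hx
        have h1 := (hY_ode c hc x hx).sub ((hFTC x hx).const_mul (p / (p - 1)))
        refine h1.congr_deriv ?_
        ring
      · intro x hx
        have hM : 0 ≤ (max (Y c x) 0) ^ ((1 : ℝ) / p) :=
          Real.rpow_nonneg (le_max_right _ _) _
        have : c * (max (Y c x) 0) ^ ((1 : ℝ) / p) ≤ 0 := mul_nonpos_of_nonpos_of_nonneg hc hM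
        nlinarith
    have := hanti (Set.left_mem_Icc.mpr (by norm_num)) hr hr.1
    simp only [intervalIntegral.integral_same, hY_init c hc] at this
    linarith
  -- Lemma B: positivity of Y c on [a, 1] when Y c 1 > 0
  have hYpos : ∀ c : ℝ, c ≤ 0 → 0 < Y c 1 → ∀ r ∈ Set.Icc a 1, 0 < Y c r := by
    intro c hc hY1 r hr
    rcases eq_or_lt_of_le hr.2 with h | hlt
    · rwa [h]
    by_contra hneg
    push_neg at hneg
    have hanti : AntitoneOn (Y c) (Set.Icc r 1) := by
      apply stmt12_auxAnti
        (f' := fun x => p / (p - 1) * (c * (max (Y c x) 0) ^ ((1 : ℝ) / p) + g x))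
      · exact (hY_cont c hc).mono (Set.Icc_subset_Icc (by linarith [hr.1]) le_rfl)
      · intro x hx
        exact hY_ode c hc x ⟨by linarith [hr.1, hx.1], hx.2⟩
      · intro x hx
        have hgx : g x < 0 := hgneg x ⟨by linarith [hr.1, hx.1], hx.2⟩
        have hM : 0 ≤ (max (Y c x) 0) ^ ((1 : ℝ) / p) :=
          Real.rpow_nonneg (le_max_right _ _) _
        have : c * (max (Y c x) 0) ^ ((1 : ℝ) / p) ≤ 0 := mul_nonpos_of_nonpos_of_nonneg hc hM
        nlinarith
    have := hanti (Set.left_mem_Icc.mpr hlt.le) (Set.right_mem_Icc.mpr hlt.le) hlt.le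
    linarith
  -- Key bound: any c ≤ 0 with Y c 1 > 0 satisfies m ≤ c
  set m : ℝ := -((p / (p - 1) * Ga) ^ e) / (1 - a) with hm_def
  have hm_neg : m < 0 := by
    apply div_neg_of_neg_of_pos
    · exact neg_neg_iff_pos.mpr (Real.rpow_pos_of_pos (mul_pos hp' hGa) e)
    · linarith
  have hkey : ∀ c : ℝ, c ≤ 0 → 0 < Y c 1 → m ≤ c := by
    intro c hc hY1
    have hposa : ∀ x ∈ Set.Icc a 1, 0 < Y c x := hYpos c hc hY1
    -- the function φ x = (Y c x)^e - c * x is antitone on [a, 1]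
    have hanti : AntitoneOn (fun x => (Y c x) ^ e - c * x) (Set.Icc a 1) := by
      apply stmt12_auxAnti (f' := fun x => g x * (Y c x) ^ (e - 1))
      · apply ContinuousOn.sub
        · exact ContinuousOn.rpow_const
            ((hY_cont c hc).mono (Set.Icc_subset_Icc ham1.le le_rfl))
            (fun x hx => Or.inl (ne_of_gt (hposa x hx)))
        · exact (continuous_const.mul continuous_id).continuousOn
      · intro x hx
        have hxmem : x ∈ Set.Icc a 1 := Set.Ioo_subset_Icc_self hx
        have hYx : 0 < Y c x := hposa x hxmem
        have hxoo : x ∈ Set.Ioo (-1 : ℝ) 1 := ⟨by linarith [hx.1], hx.2⟩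
        have hd1 : HasDerivAt (fun y => (Y c y) ^ e)
            ((p / (p - 1) * (c * (max (Y c x) 0) ^ ((1 : ℝ) / p) + g x)) * e *
              (Y c x) ^ (e - 1)) x :=
          (hY_ode c hc x hxoo).rpow_const (Or.inl (ne_of_gt hYx))
        have hd2 : HasDerivAt (fun y : ℝ => c * y) c x := by
          simpa using (hasDerivAt_id x).const_mul c
        have hmax : max (Y c x) 0 = Y c x := max_eq_left hYx.le
        have hprod : (Y c x) ^ ((1 : ℝ) / p) * (Y c x) ^ (e - 1) = 1 := by
          rw [← Real.rpow_add hYx, hexp, Real.rpow_zero]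
        have heq : (p / (p - 1) * (c * (max (Y c x) 0) ^ ((1 : ℝ) / p) + g x)) * e *
            (Y c x) ^ (e - 1) - c = g x * (Y c x) ^ (e - 1) := by
          rw [hmax]
          have : (p / (p - 1) * (c * (Y c x) ^ ((1 : ℝ) / p) + g x)) * e *
              (Y c x) ^ (e - 1)
              = (e * (p / (p - 1))) * (c * ((Y c x) ^ ((1 : ℝ) / p) * (Y c x) ^ (e - 1)))
                + (e * (p / (p - 1))) * (g x * (Y c x) ^ (e - 1)) := by ring
          rw [this, he1, hprod]
          ring
        have := hd1.sub hd2
        rwa [heq] at this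
      · intro x hx
        have hgx : g x < 0 := hgneg x ⟨by linarith [hx.1], hx.2⟩
        have hYx : 0 < Y c x := hposa x (Set.Ioo_subset_Icc_self hx)
        have : 0 ≤ (Y c x) ^ (e - 1) := Real.rpow_nonneg hYx.le _
        nlinarith
    have hineq := hanti (Set.left_mem_Icc.mpr ha1.le) (Set.right_mem_Icc.mpr ha1.le) ha1.le
    dsimp only at hineq
    have h1pos : 0 < (Y c 1) ^ e := Real.rpow_pos_of_pos hY1 e
    have hYa_pos : 0 < Y c a := hposa a (Set.left_mem_Icc.mpr ha1.le)
    have hYa_le : Y c a ≤ p / (p - 1) * Ga := hYle c hc a ⟨ham1.le, ha1.le⟩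
    have hYae : (Y c a) ^ e ≤ (p / (p - 1) * Ga) ^ e :=
      Real.rpow_le_rpow hYa_pos.le hYa_le he.le
    -- 0 < (p/(p-1)*Ga)^e + c * (1 - a)
    have hfin : 0 < (p / (p - 1) * Ga) ^ e + c * (1 - a) := by linarith
    have h1a : (0 : ℝ) < 1 - a := by linarith
    rw [hm_def, div_le_iff₀ h1a]
    nlinarith
  -- Part 1: bounded below
  have hBdd : BddBelow {c : ℝ | c < 0 ∧ 0 < Y c 1} :=
    ⟨m, fun c hc => hkey c hc.1.le hc.2⟩
  refine ⟨hBdd, ?_⟩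
  set S : Set ℝ := {c : ℝ | 0 < Y c 1} with hS_def
  have hS_ne : S.Nonempty := ⟨1, hY_pos 1 one_pos⟩
  have hS_bdd : BddBelow S := by
    refine ⟨min m 0, fun c hc => ?_⟩
    rcases le_or_gt c 0 with h | h
    · rcases eq_or_lt_of_le h with h' | h'
      · rw [h']; exact min_le_right _ _
      · exact le_trans (min_le_left _ _) (hkey c h hc)
    · exact le_trans (min_le_right _ _) h.le
  -- Y 0 1 > 0 via FTC
  have hY01 : 0 < Y 0 1 := by
    have hint : IntervalIntegrable (fun x => p / (p - 1) * g x) MeasureTheory.volume (-1) 1 :=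
      (hgi 1 (Set.right_mem_Icc.mpr (by norm_num))).const_mul _
    have hFTC2 : ∫ x in (-1 : ℝ)..1, p / (p - 1) * g x = Y 0 1 - Y 0 (-1) := by
      apply intervalIntegral.integral_eq_sub_of_hasDeriv_right_of_le (by norm_num)
        (hY_cont 0 le_rfl)
      · intro x hx
        have := (hY_ode 0 le_rfl x hx).hasDerivWithinAt (s := Set.Ioi x)
        simpa using this
      · exact hint
    rw [hY_init 0 le_rfl, sub_zero] at hFTC2
    rw [← hFTC2, intervalIntegral.integral_const_mul]
    exact mul_pos hp' hG1
  -- existence of a negative element of S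
  have hexneg : ∃ c : ℝ, c < 0 ∧ c ∈ S := by
    have hcw : ContinuousWithinAt (fun c : ℝ => Y c 1) (Set.Iic 0) 0 :=
      hY1_cont 0 (Set.mem_Iic.mpr le_rfl)
    have hev : ∀ᶠ c in nhdsWithin 0 (Set.Iic (0 : ℝ)), 0 < Y c 1 :=
      hcw.eventually (eventually_gt_nhds hY01)
    have hev' : ∀ᶠ c in nhdsWithin 0 (Set.Iio (0 : ℝ)), 0 < Y c 1 :=
      hev.filter_mono (nhdsWithin_mono 0 Set.Iio_subset_Iic_self)
    have hmem : ∀ᶠ c in nhdsWithin 0 (Set.Iio (0 : ℝ)), c ∈ Set.Iio (0 : ℝ) :=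
      eventually_mem_nhdsWithin
    obtain ⟨c, hc1, hc2⟩ := (hev'.and hmem).exists
    exact ⟨c, hc2, hc1⟩
  obtain ⟨cneg, hcneg_lt, hcneg_mem⟩ := hexneg
  set cstar : ℝ := sInf S with hcstar_def
  have hglb : IsGLB S cstar := isGLB_csInf hS_ne hS_bdd
  have hcstar_lt : cstar < 0 := lt_of_le_of_lt (csInf_le hS_bdd hcneg_mem) hcneg_lt
  refine ⟨hcstar_lt, cstar, hglb, hcstar_lt, ?_⟩
  -- continuity at cstar
  have hcont : ContinuousAt (fun c : ℝ => Y c 1) cstar :=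
    hY1_cont.continuousAt (Iic_mem_nhds hcstar_lt)
  -- Y cstar 1 ≤ 0
  have hle : Y cstar 1 ≤ 0 := by
    by_contra h
    push_neg at h
    have hev : ∀ᶠ c in nhds cstar, 0 < Y c 1 := hcont.eventually (eventually_gt_nhds h)
    have hev' : ∀ᶠ c in nhdsWithin cstar (Set.Iio cstar), 0 < Y c 1 :=
      hev.filter_mono nhdsWithin_le_nhds
    have hmem : ∀ᶠ c in nhdsWithin cstar (Set.Iio cstar), c ∈ Set.Iio cstar :=
      eventually_mem_nhdsWithin
    obtain ⟨c, hc1, hc2⟩ := (hev'.and hmem).exists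
    have : cstar ≤ c := csInf_le hS_bdd hc1
    exact absurd hc2 (not_lt.mpr this)
  -- Y cstar 1 ≥ 0
  have hge : 0 ≤ Y cstar 1 := by
    by_contra h
    push_neg at h
    have hev : ∀ᶠ c in nhds cstar, Y c 1 < 0 := hcont.eventually (eventually_lt_nhds h)
    rw [Metric.eventually_nhds_iff] at hev
    obtain ⟨ε, hε, hball⟩ := hev
    obtain ⟨c, hcS, hclt⟩ := exists_lt_of_csInf_lt hS_ne (by linarith : cstar < cstar + ε)
    have hcg : cstar ≤ c := csInf_le hS_bdd hcS
    have : Y c 1 < 0 := hball (by rw [Real.dist_eq, abs_sub_lt_iff]; constructor <;> linarith)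
    exact absurd hcS (by simp [hS_def]; linarith)
  linarith
end

section
/- Let c ∈ ℝ, a ∈ [s₀,1), and let y₁, y₂ : [a,1] → ℝ be continuously differentiable with y₁' ≤ p'(c·(y₁⁺)^{1/p} + g(r)) and y₂' ≥ p'(c·(y₂⁺)^{1/p} + g(r)) on (a,1), with y₁ > 0 and y₂ > 0 on [a,1) and y₂(1) = 0 ≤ y₁(1). Then y₂(r) ≤ y₁(r) for all r ∈ [a,1]. -/
open Set Filter

theorem stmt13 (p c s₀ a : ℝ) (hp : 1 < p)
    (hs₀ : s₀ ∈ Set.Ioo (-1 : ℝ) 1) (ha : a ∈ Set.Ico s₀ (1 : ℝ))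
    (g : ℝ → ℝ) (hg_cont : ContinuousOn g (Set.Icc (-1) 1))
    (hg_nonpos : ∀ r ∈ Set.Icc s₀ (1 : ℝ), g r ≤ 0)
    (y₁ y₂ : ℝ → ℝ)
    (hy₁_cont : ContinuousOn y₁ (Set.Icc a 1))
    (hy₂_cont : ContinuousOn y₂ (Set.Icc a 1))
    (hy₁_sub : ∀ r ∈ Set.Ioo a (1 : ℝ), ∃ d₁ : ℝ, HasDerivAt y₁ d₁ r ∧
      d₁ ≤ p / (p - 1) * (c * (max (y₁ r) 0) ^ (1 / p) + g r))
    (hy₂_sup : ∀ r ∈ Set.Ioo a (1 : ℝ), ∃ d₂ : ℝ, HasDerivAt y₂ d₂ r ∧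
      p / (p - 1) * (c * (max (y₂ r) 0) ^ (1 / p) + g r) ≤ d₂)
    (hy₁_pos : ∀ r ∈ Set.Ico a (1 : ℝ), 0 < y₁ r)
    (hy₂_pos : ∀ r ∈ Set.Ico a (1 : ℝ), 0 < y₂ r)
    (hy₂_term : y₂ 1 = 0) (hy₁_term : 0 ≤ y₁ 1) :
    ∀ r ∈ Set.Icc a (1 : ℝ), y₂ r ≤ y₁ r := by
  have hp0 : 0 < p := lt_trans one_pos hp
  have hp1 : 0 < p - 1 := sub_pos.mpr hp
  have h1p : 0 < 1 / p := by positivity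
  have h1p1 : 1 / p < 1 := by rw [div_lt_one hp0]; exact hp
  set q : ℝ := 1 - 1 / p with hq_def
  have hq_pos : 0 < q := by simp only [hq_def]; linarith
  have hq1 : q - 1 < 0 := by simp only [hq_def]; linarith
  set φ : ℝ → ℝ := fun r => (y₂ r) ^ q - (y₁ r) ^ q with hφ_def
  have hφ_cont : ContinuousOn φ (Set.Icc a 1) :=
    (hy₂_cont.rpow_const fun x _ => Or.inr hq_pos.le).sub
      (hy₁_cont.rpow_const fun x _ => Or.inr hq_pos.le)
  have hφ1 : φ 1 ≤ 0 := by
    have h1 : (0:ℝ) ≤ (y₁ 1) ^ q := Real.rpow_nonneg hy₁_term q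
    simp only [hφ_def, hy₂_term, Real.zero_rpow hq_pos.ne']
    linarith
  -- Main claim: φ ≤ 0 on [a,1]
  have main : ∀ r ∈ Set.Icc a (1:ℝ), φ r ≤ 0 := by
    by_contra hcon
    push_neg at hcon
    obtain ⟨r₀, hr₀mem, hr₀⟩ := hcon
    set ε := φ r₀ with hε
    have hr₀1 : r₀ < 1 := by
      rcases eq_or_lt_of_le hr₀mem.2 with h | h
      · exfalso
        have h2 : φ r₀ ≤ 0 := by rw [h]; exact hφ1
        rw [← hε] at h2; linarith
      · exact h
    set A := {r ∈ Set.Icc r₀ (1:ℝ) | ε ≤ φ r} with hA_def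
    have hsub : Set.Icc r₀ (1:ℝ) ⊆ Set.Icc a 1 := Set.Icc_subset_Icc hr₀mem.1 le_rfl
    have hA_closed : IsClosed A := by
      have h := (hφ_cont.mono hsub).preimage_isClosed_of_isClosed isClosed_Icc
        (isClosed_Ici (a := ε))
      exact h
    have hA_ne : A.Nonempty := ⟨r₀, ⟨le_rfl, hr₀1.le⟩, le_rfl⟩
    have hA_bdd : BddAbove A := ⟨1, fun x hx => hx.1.2⟩
    set m := sSup A with hm_def
    have hmA : m ∈ A := hA_closed.csSup_mem hA_ne hA_bdd
    obtain ⟨⟨hr₀m, hm1⟩, hφm⟩ := hmA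
    have hm1' : m < 1 := by
      rcases eq_or_lt_of_le hm1 with h | h
      · exfalso; rw [h] at hφm; linarith
      · exact h
    have hma : a ≤ m := hr₀mem.1.trans hr₀m
    have hmem : m ∈ Set.Icc a (1:ℝ) := ⟨hma, hm1⟩
    have hev : ∀ᶠ r in nhdsWithin m (Set.Icc a 1), 0 < φ r :=
      (hφ_cont m hmem).eventually (eventually_gt_nhds (lt_of_lt_of_le hr₀ hφm))
    rw [Filter.eventually_iff, Metric.mem_nhdsWithin_iff] at hev
    obtain ⟨δ, hδ, hball⟩ := hev
    set t := min (m + δ / 2) ((m + 1) / 2) with ht_def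
    have hmt : m < t := lt_min (by linarith) (by linarith)
    have ht1 : t < 1 := lt_of_le_of_lt (min_le_right _ _) (by linarith)
    have hIcc_sub : Set.Icc m t ⊆ Set.Icc a 1 :=
      Set.Icc_subset_Icc hma ht1.le
    have hφpos : ∀ r ∈ Set.Icc m t, 0 < φ r := by
      intro r hr
      apply hball
      constructor
      · rw [Metric.mem_ball, Real.dist_eq, abs_of_nonneg (sub_nonneg.mpr hr.1)]
        have : r ≤ m + δ / 2 := hr.2.trans (min_le_left _ _)
        linarith
      · exact hIcc_sub hr
    -- pointwise derivative nonneg on (m, t)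
    have hkey : ∀ r ∈ Set.Ioo m t, ∃ D : ℝ, HasDerivAt φ D r ∧ 0 ≤ D := by
      intro r hr
      have hra : a < r := lt_of_le_of_lt hma hr.1
      have hr1 : r < 1 := hr.2.trans ht1
      have hy1p : 0 < y₁ r := hy₁_pos r ⟨hra.le, hr1⟩
      have hy2p : 0 < y₂ r := hy₂_pos r ⟨hra.le, hr1⟩
      have hle : y₁ r ≤ y₂ r := by
        by_contra h
        push_neg at h
        have := Real.rpow_lt_rpow hy2p.le h hq_pos
        have hφr := hφpos r ⟨hr.1.le, hr.2.le⟩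
        simp only [hφ_def] at hφr
        linarith
      obtain ⟨d₁, hd₁, hd₁le⟩ := hy₁_sub r ⟨hra, hr1⟩
      obtain ⟨d₂, hd₂, hd₂le⟩ := hy₂_sup r ⟨hra, hr1⟩
      rw [max_eq_left hy1p.le] at hd₁le
      rw [max_eq_left hy2p.le] at hd₂le
      have hu₁ : HasDerivAt (fun x => (y₁ x) ^ q) (d₁ * q * (y₁ r) ^ (q - 1)) r :=
        hd₁.rpow_const (Or.inl hy1p.ne')
      have hu₂ : HasDerivAt (fun x => (y₂ x) ^ q) (d₂ * q * (y₂ r) ^ (q - 1)) r :=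
        hd₂.rpow_const (Or.inl hy2p.ne')
      refine ⟨d₂ * q * (y₂ r) ^ (q - 1) - d₁ * q * (y₁ r) ^ (q - 1), hu₂.sub hu₁, ?_⟩
      have hB₁ : (0:ℝ) < (y₁ r) ^ (q - 1) := Real.rpow_pos_of_pos hy1p _
      have hB₂ : (0:ℝ) < (y₂ r) ^ (q - 1) := Real.rpow_pos_of_pos hy2p _
      have hpq : p / (p - 1) * q = 1 := by
        rw [hq_def]; field_simp
      have e₂ : p / (p - 1) * (c * (y₂ r) ^ (1/p) + g r) * (q * (y₂ r) ^ (q - 1))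
          = c + g r * (y₂ r) ^ (q - 1) := by
        have hy : (y₂ r) ^ (1/p) * (y₂ r) ^ (q - 1) = 1 := by
          rw [← Real.rpow_add hy2p]
          have : 1/p + (q - 1) = 0 := by rw [hq_def]; ring
          rw [this, Real.rpow_zero]
        calc p / (p - 1) * (c * (y₂ r) ^ (1/p) + g r) * (q * (y₂ r) ^ (q - 1))
            = (p / (p - 1) * q) * (c * ((y₂ r) ^ (1/p) * (y₂ r) ^ (q - 1)))
              + (p / (p - 1) * q) * (g r * (y₂ r) ^ (q - 1)) := by ring
          _ = c + g r * (y₂ r) ^ (q - 1) := by rw [hpq, hy]; ring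
      have e₁ : p / (p - 1) * (c * (y₁ r) ^ (1/p) + g r) * (q * (y₁ r) ^ (q - 1))
          = c + g r * (y₁ r) ^ (q - 1) := by
        have hy : (y₁ r) ^ (1/p) * (y₁ r) ^ (q - 1) = 1 := by
          rw [← Real.rpow_add hy1p]
          have : 1/p + (q - 1) = 0 := by rw [hq_def]; ring
          rw [this, Real.rpow_zero]
        calc p / (p - 1) * (c * (y₁ r) ^ (1/p) + g r) * (q * (y₁ r) ^ (q - 1))
            = (p / (p - 1) * q) * (c * ((y₁ r) ^ (1/p) * (y₁ r) ^ (q - 1)))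
              + (p / (p - 1) * q) * (g r * (y₁ r) ^ (q - 1)) := by ring
          _ = c + g r * (y₁ r) ^ (q - 1) := by rw [hpq, hy]; ring
      have h₂ : c + g r * (y₂ r) ^ (q - 1) ≤ d₂ * q * (y₂ r) ^ (q - 1) := by
        have := mul_le_mul_of_nonneg_right hd₂le
          (le_of_lt (mul_pos hq_pos hB₂))
        rw [e₂] at this
        calc c + g r * (y₂ r) ^ (q - 1) ≤ d₂ * (q * (y₂ r) ^ (q - 1)) := this
          _ = d₂ * q * (y₂ r) ^ (q - 1) := by ring
      have h₁ : d₁ * q * (y₁ r) ^ (q - 1) ≤ c + g r * (y₁ r) ^ (q - 1) := by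
        have := mul_le_mul_of_nonneg_right hd₁le
          (le_of_lt (mul_pos hq_pos hB₁))
        rw [e₁] at this
        calc d₁ * q * (y₁ r) ^ (q - 1) = d₁ * (q * (y₁ r) ^ (q - 1)) := by ring
          _ ≤ c + g r * (y₁ r) ^ (q - 1) := this
      have hgr : g r ≤ 0 := hg_nonpos r ⟨ha.1.trans hra.le, hr1.le⟩
      have hmono : (y₂ r) ^ (q - 1) ≤ (y₁ r) ^ (q - 1) :=
        Real.rpow_le_rpow_of_nonpos hy1p hle hq1.le
      have hg : g r * (y₁ r) ^ (q - 1) ≤ g r * (y₂ r) ^ (q - 1) :=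
        mul_le_mul_of_nonpos_left hmono hgr
      linarith
    have hmonoφ : MonotoneOn φ (Set.Icc m t) := by
      apply monotoneOn_of_deriv_nonneg (convex_Icc m t) (hφ_cont.mono hIcc_sub)
      · rw [interior_Icc]
        intro x hx
        obtain ⟨D, hD, _⟩ := hkey x hx
        exact hD.differentiableAt.differentiableWithinAt
      · rw [interior_Icc]
        intro x hx
        obtain ⟨D, hD, hD0⟩ := hkey x hx
        rw [hD.deriv]; exact hD0
    have hφt : ε ≤ φ t :=
      le_trans hφm (hmonoφ ⟨le_rfl, hmt.le⟩ ⟨hmt.le, le_rfl⟩ hmt.le)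
    have htA : t ∈ A := ⟨⟨hr₀m.trans hmt.le, ht1.le⟩, hφt⟩
    exact absurd (le_csSup hA_bdd htA) (not_le.mpr hmt)
  -- conclude
  intro r hr
  rcases eq_or_lt_of_le hr.2 with h | h
  · rw [h, hy₂_term]; exact hy₁_term
  · by_contra hcon
    push_neg at hcon
    have h1 : (y₁ r) ^ q < (y₂ r) ^ q :=
      Real.rpow_lt_rpow (hy₁_pos r ⟨hr.1, h⟩).le hcon hq_pos
    have := main r hr
    simp only [hφ_def] at this
    linarith
end

section
/- Let c ∈ ℝ, a ∈ [s₀,1), and y₁, y₂ as in the terminal-value comparison with y₂(1) = 0 < y₁(1). Then y₂(r) < y₁(r) strictly for all r ∈ [a,1]. -/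
open Set Filter

private lemma rpow_neg_lip {β η : ℝ} (hβ : 0 < β) (hη : 0 < η) {ξ ζ : ℝ}
    (hξ : η ≤ ξ) (hζ : η ≤ ζ) :
    |ξ ^ (-β) - ζ ^ (-β)| ≤ β * η ^ (-β - 1) * |ξ - ζ| := by
  have h := Convex.norm_image_sub_le_of_norm_hasDerivWithin_le
      (f := fun t : ℝ => t ^ (-β)) (f' := fun t : ℝ => (-β) * t ^ (-β - 1))
      (s := Set.Ici η) (C := β * η ^ (-β - 1))
      (fun x hx => (Real.hasDerivAt_rpow_const
        (Or.inl (ne_of_gt (lt_of_lt_of_le hη hx)))).hasDerivWithinAt)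
      (fun x hx => by
        have hxpos : 0 < x := lt_of_lt_of_le hη hx
        have h1 : x ^ (-β - 1) ≤ η ^ (-β - 1) :=
          Real.rpow_le_rpow_of_nonpos hη hx (by linarith)
        have h2 : (0:ℝ) < x ^ (-β - 1) := Real.rpow_pos_of_pos hxpos _
        rw [Real.norm_eq_abs, abs_mul, abs_neg, abs_of_pos hβ, abs_of_pos h2]
        exact mul_le_mul_of_nonneg_left h1 hβ.le)
      (convex_Ici η) hζ hξ
  simpa [Real.norm_eq_abs] using h

private lemma key_invariance {u : ℝ → ℝ} {t₀ s C : ℝ} (hts : t₀ < s) (hC : 0 ≤ C)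
    (hu_cont : ContinuousOn u (Set.Icc t₀ s))
    (hu' : ∀ x ∈ Set.Ioo t₀ s, ∃ d, HasDerivAt u d x ∧ C * min (u x) 0 ≤ d)
    (h0 : 0 ≤ u t₀) : 0 ≤ u s := by
  have main : ∀ ε > (0:ℝ), -(ε * Real.exp ((C+1)*(s - t₀))) ≤ u s := by
    intro ε hε
    set v : ℝ → ℝ := fun x => u x + ε * Real.exp ((C+1)*(x - t₀)) with hv
    have hv_cont : ContinuousOn v (Set.Icc t₀ s) :=
      hu_cont.add (Continuous.continuousOn (by continuity))
    have hvt₀ : 0 < v t₀ := by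
      simp only [hv, sub_self, mul_zero, Real.exp_zero, mul_one]
      linarith
    have hvpos : ∀ x ∈ Set.Icc t₀ s, 0 < v x := by
      by_contra hcon
      push_neg at hcon
      set T : Set ℝ := {x | x ∈ Set.Icc t₀ s ∧ v x ≤ 0} with hT
      have hTne : T.Nonempty := by
        obtain ⟨x, hx1, hx2⟩ := hcon; exact ⟨x, hx1, hx2⟩
      have hTclosed : IsClosed T := by
        have : T = Set.Icc t₀ s ∩ v ⁻¹' (Set.Iic 0) := by
          ext x; simp [hT, Set.mem_setOf_eq, Set.mem_inter_iff]
        rw [this]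
        exact hv_cont.preimage_isClosed_of_isClosed isClosed_Icc isClosed_Iic
      have hbdd : BddBelow T := ⟨t₀, fun x hx => hx.1.1⟩
      have ht₁T : sInf T ∈ T := hTclosed.csInf_mem hTne hbdd
      set t₁ := sInf T with ht₁
      have ht₁Icc : t₁ ∈ Set.Icc t₀ s := ht₁T.1
      have ht₁0 : v t₁ ≤ 0 := ht₁T.2
      have ht₀t₁ : t₀ < t₁ := by
        rcases lt_or_eq_of_le ht₁Icc.1 with h | h
        · exact h
        · exfalso; rw [← h] at ht₁0; linarith
      have hbefore : ∀ x ∈ Set.Ico t₀ t₁, 0 < v x := by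
        intro x hx
        by_contra h'
        push_neg at h'
        have hxT : x ∈ T := ⟨⟨hx.1, le_trans hx.2.le ht₁Icc.2⟩, h'⟩
        have := csInf_le hbdd hxT
        linarith [hx.2]
      have hmono : StrictMonoOn v (Set.Icc t₀ t₁) := by
        apply strictMonoOn_of_deriv_pos (convex_Icc _ _)
          (hv_cont.mono (Set.Icc_subset_Icc le_rfl ht₁Icc.2))
        intro x hx
        rw [interior_Icc] at hx
        have hxs : x ∈ Set.Ioo t₀ s := ⟨hx.1, lt_of_lt_of_le hx.2 ht₁Icc.2⟩
        obtain ⟨d, hd, hdge⟩ := hu' x hxs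
        set E := Real.exp ((C+1)*(x - t₀)) with hE
        have hEpos : 0 < E := Real.exp_pos _
        have hvd : HasDerivAt v (d + ε * (E * (C+1))) x := by
          have h2 : HasDerivAt (fun y : ℝ => (C+1)*(y - t₀)) (C+1) x := by
            simpa using ((hasDerivAt_id x).sub_const t₀).const_mul (C+1)
          exact hd.add ((h2.exp).const_mul ε)
        rw [hvd.deriv]
        have hvx : 0 < v x := hbefore x ⟨hx.1.le, hx.2⟩
        have hux : -(ε * E) < u x := by
          simp only [hv] at hvx; linarith
        have hmin : -(ε * E) ≤ min (u x) 0 :=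
          le_min hux.le (neg_nonpos.2 (by positivity))
        have hd2 : C * (-(ε * E)) ≤ d :=
          le_trans (mul_le_mul_of_nonneg_left hmin hC) hdge
        nlinarith
      have := hmono (Set.left_mem_Icc.2 ht₀t₁.le) (Set.right_mem_Icc.2 ht₀t₁.le) ht₀t₁
      linarith
    have := hvpos s (Set.right_mem_Icc.2 hts.le)
    simp only [hv] at this
    linarith
  by_contra hns
  push_neg at hns
  set E := Real.exp ((C+1)*(s - t₀)) with hE
  have hEpos : 0 < E := Real.exp_pos _
  have h1 := main ((-u s)/(2*E)) (div_pos (by linarith) (by positivity))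
  have h2 : (-u s)/(2*E)*E = -u s/2 := by field_simp
  rw [h2] at h1
  linarith
set_option maxHeartbeats 2000000 in
theorem stmt14 (p c s₀ a : ℝ) (hp : 1 < p)
    (hs₀ : s₀ ∈ Set.Ioo (-1 : ℝ) 1) (ha : a ∈ Set.Ico s₀ (1 : ℝ))
    (g : ℝ → ℝ) (hg_cont : ContinuousOn g (Set.Icc (-1) 1))
    (hg_nonpos : ∀ r ∈ Set.Icc s₀ (1 : ℝ), g r ≤ 0)
    (y₁ y₂ : ℝ → ℝ)
    (hy₁_cont : ContinuousOn y₁ (Set.Icc a 1))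
    (hy₂_cont : ContinuousOn y₂ (Set.Icc a 1))
    (hy₁_sub : ∀ r ∈ Set.Ioo a (1 : ℝ), ∃ d₁ : ℝ, HasDerivAt y₁ d₁ r ∧
      d₁ ≤ p / (p - 1) * (c * (max (y₁ r) 0) ^ (1 / p) + g r))
    (hy₂_sup : ∀ r ∈ Set.Ioo a (1 : ℝ), ∃ d₂ : ℝ, HasDerivAt y₂ d₂ r ∧
      p / (p - 1) * (c * (max (y₂ r) 0) ^ (1 / p) + g r) ≤ d₂)
    (hy₁_pos : ∀ r ∈ Set.Ico a (1 : ℝ), 0 < y₁ r)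
    (hy₂_pos : ∀ r ∈ Set.Ico a (1 : ℝ), 0 < y₂ r)
    (hy₂_term : y₂ 1 = 0) (hy₁_term : 0 < y₁ 1) :
    ∀ r ∈ Set.Icc a (1 : ℝ), y₂ r < y₁ r := by
  by_contra hcon
  push_neg at hcon
  obtain ⟨r₀, hr₀Icc, hr₀le⟩ := hcon
  have hp0 : (0:ℝ) < p := by linarith
  have hp1 : (0:ℝ) < p - 1 := by linarith
  set α : ℝ := (p - 1) / p with hαdef
  have hα : 0 < α := div_pos hp1 hp0
  have hpne : p ≠ 0 := ne_of_gt hp0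
  have hp1ne : p - 1 ≠ 0 := ne_of_gt hp1
  have hα1 : α - 1 = -(1 / p) := by rw [hαdef]; field_simp; ring
  have hr₀1 : r₀ < 1 := by
    rcases lt_or_eq_of_le hr₀Icc.2 with h | h
    · exact h
    · exfalso; rw [h] at hr₀le; rw [hy₂_term] at hr₀le; linarith
  have hr₀Ico : r₀ ∈ Set.Ico a 1 := ⟨hr₀Icc.1, hr₀1⟩
  set u : ℝ → ℝ := fun t => y₂ t ^ α - y₁ t ^ α with hu
  have hur₀ : 0 ≤ u r₀ := by
    have : y₁ r₀ ^ α ≤ y₂ r₀ ^ α :=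
      Real.rpow_le_rpow (hy₁_pos r₀ hr₀Ico).le hr₀le hα.le
    simp only [hu]; linarith
  -- main claim
  have claim : ∀ s ∈ Set.Ico r₀ 1, 0 ≤ u s := by
    intro s hsIco
    rcases eq_or_lt_of_le hsIco.1 with heq | hlt
    · rw [← heq]; exact hur₀
    · have hs1 : s < 1 := hsIco.2
      have hsubIco : Set.Icc r₀ s ⊆ Set.Ico a 1 :=
        fun t ht => ⟨le_trans hr₀Ico.1 ht.1, lt_of_le_of_lt ht.2 hs1⟩
      have hsubIcc : Set.Icc r₀ s ⊆ Set.Icc a 1 :=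
        fun t ht => ⟨le_trans hr₀Ico.1 ht.1, le_trans ht.2 hs1.le⟩
      -- lower bounds on y₁ y₂
      obtain ⟨x₁, hx₁mem, hx₁min⟩ := isCompact_Icc.exists_isMinOn
        ⟨r₀, Set.left_mem_Icc.2 hlt.le⟩ (hy₁_cont.mono hsubIcc)
      obtain ⟨x₂, hx₂mem, hx₂min⟩ := isCompact_Icc.exists_isMinOn
        ⟨r₀, Set.left_mem_Icc.2 hlt.le⟩ (hy₂_cont.mono hsubIcc)
      set ε₀ : ℝ := min (y₁ x₁) (y₂ x₂) with hε₀def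
      have hε₀pos : 0 < ε₀ :=
        lt_min (hy₁_pos x₁ (hsubIco hx₁mem)) (hy₂_pos x₂ (hsubIco hx₂mem))
      have hε₁ : ∀ t ∈ Set.Icc r₀ s, ε₀ ≤ y₁ t :=
        fun t ht => le_trans (min_le_left _ _) (isMinOn_iff.mp hx₁min t ht)
      have hε₂ : ∀ t ∈ Set.Icc r₀ s, ε₀ ≤ y₂ t :=
        fun t ht => le_trans (min_le_right _ _) (isMinOn_iff.mp hx₂min t ht)
      -- bound on g
      obtain ⟨G, hG⟩ := isCompact_Icc.exists_bound_of_continuousOn hg_cont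
      have hG0 : 0 ≤ G := le_trans (norm_nonneg _)
        (hG 1 ⟨by norm_num, le_refl 1⟩)
      set β : ℝ := 1 / (p - 1) with hβdef
      have hβ : 0 < β := by positivity
      set η : ℝ := ε₀ ^ α with hηdef
      have hη : 0 < η := Real.rpow_pos_of_pos hε₀pos _
      set L : ℝ := β * η ^ (-β - 1) with hLdef
      have hL : 0 ≤ L := by positivity
      have hC0 : 0 ≤ G * L := mul_nonneg hG0 hL
      have hucont : ContinuousOn u (Set.Icc r₀ s) := by
        apply ContinuousOn.sub
        · exact (hy₂_cont.mono hsubIcc).rpow_const (fun x _ => Or.inr hα.le)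
        · exact (hy₁_cont.mono hsubIcc).rpow_const (fun x _ => Or.inr hα.le)
      apply key_invariance hlt hC0 hucont _ hur₀
      intro x hx
      have hxIcc : x ∈ Set.Icc r₀ s := ⟨hx.1.le, hx.2.le⟩
      have hxa1 : x ∈ Set.Ioo a 1 :=
        ⟨lt_of_le_of_lt hr₀Ico.1 hx.1, lt_trans hx.2 hs1⟩
      obtain ⟨d₁, hd₁, hd₁le⟩ := hy₁_sub x hxa1
      obtain ⟨d₂, hd₂, hd₂ge⟩ := hy₂_sup x hxa1
      have hy₁x : 0 < y₁ x := lt_of_lt_of_le hε₀pos (hε₁ x hxIcc)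
      have hy₂x : 0 < y₂ x := lt_of_lt_of_le hε₀pos (hε₂ x hxIcc)
      rw [max_eq_left hy₁x.le] at hd₁le
      rw [max_eq_left hy₂x.le] at hd₂ge
      have hz₁ : HasDerivAt (fun t => y₁ t ^ α) (d₁ * α * y₁ x ^ (α - 1)) x :=
        hd₁.rpow_const (Or.inl hy₁x.ne')
      have hz₂ : HasDerivAt (fun t => y₂ t ^ α) (d₂ * α * y₂ x ^ (α - 1)) x :=
        hd₂.rpow_const (Or.inl hy₂x.ne')
      refine ⟨_, hz₂.sub hz₁, ?_⟩
      set A : ℝ := y₂ x ^ (-(1/p)) with hAdef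
      set B : ℝ := y₁ x ^ (-(1/p)) with hBdef
      have hαp : α * (p / (p - 1)) = 1 := by rw [hαdef]; field_simp
      -- lower bound for z₂ derivative
      have hpos₂ : 0 < α * y₂ x ^ (α - 1) :=
        mul_pos hα (Real.rpow_pos_of_pos hy₂x _)
      have hpos₁ : 0 < α * y₁ x ^ (α - 1) :=
        mul_pos hα (Real.rpow_pos_of_pos hy₁x _)
      have hPQ₂ : y₂ x ^ (1/p) * y₂ x ^ (-(1/p)) = 1 := by
        rw [← Real.rpow_add hy₂x]; simp
      have hPQ₁ : y₁ x ^ (1/p) * y₁ x ^ (-(1/p)) = 1 := by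
        rw [← Real.rpow_add hy₁x]; simp
      have e₂ : p / (p - 1) * (c * y₂ x ^ (1/p) + g x) * (α * y₂ x ^ (α - 1))
          = c + g x * A := by
        rw [hα1, hAdef,
          show p / (p - 1) * (c * y₂ x ^ (1/p) + g x) * (α * y₂ x ^ (-(1/p)))
            = (α * (p / (p - 1))) * c * (y₂ x ^ (1/p) * y₂ x ^ (-(1/p)))
              + (α * (p / (p - 1))) * (g x * y₂ x ^ (-(1/p))) from by ring,
          hPQ₂, hαp]
        ring
      have e₁ : p / (p - 1) * (c * y₁ x ^ (1/p) + g x) * (α * y₁ x ^ (α - 1))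
          = c + g x * B := by
        rw [hα1, hBdef,
          show p / (p - 1) * (c * y₁ x ^ (1/p) + g x) * (α * y₁ x ^ (-(1/p)))
            = (α * (p / (p - 1))) * c * (y₁ x ^ (1/p) * y₁ x ^ (-(1/p)))
              + (α * (p / (p - 1))) * (g x * y₁ x ^ (-(1/p))) from by ring,
          hPQ₁, hαp]
        ring
      have h₂ : c + g x * A ≤ d₂ * α * y₂ x ^ (α - 1) := by
        have := mul_le_mul_of_nonneg_right hd₂ge hpos₂.le
        rw [e₂] at this; linarith [this, mul_assoc d₂ α (y₂ x ^ (α - 1))]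
      have h₁ : d₁ * α * y₁ x ^ (α - 1) ≤ c + g x * B := by
        have := mul_le_mul_of_nonneg_right hd₁le hpos₁.le
        rw [e₁] at this; linarith [this, mul_assoc d₁ α (y₁ x ^ (α - 1))]
      have hkey : g x * (A - B) ≤ d₂ * α * y₂ x ^ (α - 1) - d₁ * α * y₁ x ^ (α - 1) := by
        have : g x * (A - B) = (c + g x * A) - (c + g x * B) := by ring
        linarith [this, h₁, h₂]
      -- now bound g x * (A - B) from below
      have hsuff : G * L * min (u x) 0 ≤ g x * (A - B) := by
        rcases le_or_gt (u x) 0 with hux | hux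
        · rw [min_eq_left hux]
          have hz₁η : η ≤ y₁ x ^ α := Real.rpow_le_rpow hε₀pos.le (hε₁ x hxIcc) hα.le
          have hz₂η : η ≤ y₂ x ^ α := Real.rpow_le_rpow hε₀pos.le (hε₂ x hxIcc) hα.le
          have hαβ : α * (-β) = -(1/p) := by rw [hαdef, hβdef]; field_simp
          have hA' : (y₂ x ^ α) ^ (-β) = A := by
            rw [← Real.rpow_mul hy₂x.le, hαβ]
          have hB' : (y₁ x ^ α) ^ (-β) = B := by
            rw [← Real.rpow_mul hy₁x.le, hαβ]
          have hlip := rpow_neg_lip hβ hη hz₂η hz₁η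
          rw [hA', hB'] at hlip
          have huxeq : y₂ x ^ α - y₁ x ^ α = u x := rfl
          rw [huxeq] at hlip
          have habs_u : |u x| = -(u x) := abs_of_nonpos hux
          have hgxG : |g x| ≤ G := by
            have := hG x ⟨by linarith [hs₀.1, ha.1, hr₀Ico.1, hx.1], hxa1.2.le⟩
            rwa [Real.norm_eq_abs] at this
          have e2 : -(|g x| * |A - B|) ≤ g x * (A - B) := by
            rw [← abs_mul]; exact neg_abs_le _
          have e3 : |g x| * |A - B| ≤ G * (L * |u x|) := by
            rw [hLdef]
            exact mul_le_mul hgxG hlip (abs_nonneg _) hG0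
          rw [habs_u] at e3
          have e4 : G * (L * -(u x)) = -(G * L * u x) := by ring
          linarith
        · rw [min_eq_right hux.le, mul_zero]
          have hgx : g x ≤ 0 := hg_nonpos x
            ⟨le_trans ha.1 (le_trans hr₀Ico.1 hx.1.le), hxa1.2.le⟩
          have hzle : y₁ x ^ α ≤ y₂ x ^ α := by
            simp only [hu] at hux; linarith
          have hyle : y₁ x ≤ y₂ x :=
            (Real.rpow_le_rpow_iff hy₁x.le hy₂x.le hα).mp hzle
          have hAB : A ≤ B :=
            Real.rpow_le_rpow_of_nonpos hy₁x hyle (neg_nonpos.2 (by positivity))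
          nlinarith [mul_nonneg (neg_nonneg.2 hgx) (sub_nonneg.2 hAB)]
      exact le_trans hsuff hkey
  -- conclude
  have hu1lt : u 1 < 0 := by
    have h2 : (y₂ 1 : ℝ) ^ α = 0 := by rw [hy₂_term]; exact Real.zero_rpow hα.ne'
    have h1 : 0 < y₁ 1 ^ α := Real.rpow_pos_of_pos hy₁_term α
    simp only [hu]; linarith
  have hu1ge : 0 ≤ u 1 := by
    have hsub : Set.Icc r₀ 1 ⊆ Set.Icc a 1 := Set.Icc_subset_Icc_left hr₀Ico.1
    have hucont1 : ContinuousOn u (Set.Icc r₀ 1) := by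
      apply ContinuousOn.sub
      · exact (hy₂_cont.mono hsub).rpow_const (fun x _ => Or.inr hα.le)
      · exact (hy₁_cont.mono hsub).rpow_const (fun x _ => Or.inr hα.le)
    have htend : Filter.Tendsto u (nhdsWithin 1 (Set.Ico r₀ 1)) (nhds (u 1)) :=
      (hucont1 1 (Set.right_mem_Icc.2 hr₀1.le)).mono Set.Ico_subset_Icc_self
    haveI : (nhdsWithin 1 (Set.Ico r₀ 1)).NeBot := by
      rw [← mem_closure_iff_nhdsWithin_neBot, closure_Ico (ne_of_lt hr₀1)]
      exact Set.right_mem_Icc.2 hr₀1.le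
    exact ge_of_tendsto htend (eventually_mem_nhdsWithin.mono claim)
  linarith
end

section
/- Suppose g(r) = (γ₀ + η(r))(1+r)^γ near r = -1 with γ₀ > 0, η continuous, η(-1) = 0, and 0 < γ ≤ 1/(p-1). Then for w_κ(r) := κ(1+r)^{1+γ}, there exist ρ ∈ (0,2) and 0 < κ₁ < κ₂ < ∞ such that: (i) for 0 < κ ≤ κ₁, w_κ'(r) < p'(c·w_κ(r)^{1/p} + g(r)) for all r ∈ (-1,-1+ρ); and (ii) for κ ≥ κ₂, w_κ'(r) > p'(c·w_κ(r)^{1/p} + g(r)) for all r ∈ (-1,-1+ρ). -/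
open Set Filter

set_option maxHeartbeats 2000000 in
theorem stmt16 (p c γ γ₀ ρ₀ : ℝ) (hp : 1 < p)
    (hγ₀ : 0 < γ₀) (hγ : 0 < γ) (hγp : γ ≤ 1 / (p - 1))
    (hρ₀ : 0 < ρ₀) (hρ₀2 : ρ₀ < 2)
    (g η : ℝ → ℝ) (hg_cont : ContinuousOn g (Set.Icc (-1) 1))
    (hη_cont : ContinuousOn η (Set.Icc (-1) 1)) (hη_init : η (-1) = 0)
    (hg_asym : ∀ r ∈ Set.Ioo (-1 : ℝ) (-1 + ρ₀),
      g r = (γ₀ + η r) * (1 + r) ^ γ) :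
    ∃ ρ κ₁ κ₂ : ℝ, 0 < ρ ∧ ρ < 2 ∧ 0 < κ₁ ∧ κ₁ < κ₂ ∧
      (∀ κ : ℝ, 0 < κ → κ ≤ κ₁ → ∀ r ∈ Set.Ioo (-1 : ℝ) (-1 + ρ),
        κ * (1 + γ) * (1 + r) ^ γ <
          p / (p - 1) * (c * (κ * (1 + r) ^ (1 + γ)) ^ (1 / p) + g r)) ∧
      (∀ κ : ℝ, κ₂ ≤ κ → ∀ r ∈ Set.Ioo (-1 : ℝ) (-1 + ρ),
        p / (p - 1) * (c * (κ * (1 + r) ^ (1 + γ)) ^ (1 / p) + g r) <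
          κ * (1 + γ) * (1 + r) ^ γ) := by
  have hp0 : (0:ℝ) < p := lt_trans one_pos hp
  have hp1 : (0:ℝ) < p - 1 := by linarith
  set p' : ℝ := p / (p - 1) with hp'def
  have hp'pos : 0 < p' := div_pos hp0 hp1
  have hγle : γ ≤ (1 + γ) / p := by
    rw [le_div_iff₀ hp0]
    have h1 : γ * (p - 1) ≤ 1 := by
      have := hγp
      rw [le_div_iff₀ hp1] at this
      linarith
    nlinarith [h1, hγ, hp0]
  -- continuity of η at -1
  obtain ⟨δ, hδpos, hδη⟩ : ∃ δ > 0, ∀ r ∈ Set.Icc (-1:ℝ) 1, dist r (-1) < δ → |η r| < γ₀ / 2 := by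
    have h := hη_cont (-1) (by constructor <;> norm_num)
    rw [Metric.continuousWithinAt_iff] at h
    obtain ⟨δ, hδ, h⟩ := h (γ₀ / 2) (by positivity)
    exact ⟨δ, hδ, fun r hr hrd => by
      have := h hr hrd
      simpa [hη_init, Real.dist_eq] using this⟩
  set ρ : ℝ := min ρ₀ (min 1 δ) with hρdef
  have hρpos : 0 < ρ := lt_min hρ₀ (lt_min one_pos hδpos)
  have hρ1 : ρ ≤ 1 := le_trans (min_le_right _ _) (min_le_left _ _)
  have hρδ : ρ ≤ δ := le_trans (min_le_right _ _) (min_le_right _ _)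
  have hρρ₀ : ρ ≤ ρ₀ := min_le_left _ _
  -- constants
  set E : ℝ := (1 + γ) + p' * |c| + 1 with hEdef
  have hEpos : 0 < E := by positivity
  set M : ℝ := p' * γ₀ / (2 * E) with hMdef
  have hMpos : 0 < M := by positivity
  have hME : M * E = p' * γ₀ / 2 := by
    rw [hMdef, div_mul_eq_mul_div, mul_div_mul_right _ _ hEpos.ne']
  set κ₁ : ℝ := min 1 (M ^ p) with hκ₁def
  have hκ₁pos : 0 < κ₁ := lt_min one_pos (Real.rpow_pos_of_pos hMpos p)
  have hκ₁le1 : κ₁ ≤ 1 := min_le_left _ _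
  set C : ℝ := 2 * p' * (|c| + 1) / (1 + γ) with hCdef
  have hCpos : 0 < C := by positivity
  have hC : C * (1 + γ) = 2 * p' * (|c| + 1) := by
    rw [hCdef, div_mul_cancel₀ _ (ne_of_gt (by linarith : (0:ℝ) < 1 + γ))]
  set D : ℝ := 3 * p' * γ₀ / (1 + γ) with hDdef
  have hDpos : 0 < D := by positivity
  have hD : D * (1 + γ) = 3 * p' * γ₀ := by
    rw [hDdef, div_mul_cancel₀ _ (ne_of_gt (by linarith : (0:ℝ) < 1 + γ))]
  set κ₂ : ℝ := max (κ₁ + 1) (max (C ^ p') (2 * D + 1)) with hκ₂def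
  have hκ₁κ₂ : κ₁ < κ₂ := lt_of_lt_of_le (by linarith) (le_max_left _ _)
  have hκ₂pos : 0 < κ₂ := lt_trans hκ₁pos hκ₁κ₂
  have hκ₁M : κ₁ ≤ M ^ p := min_le_right _ _
  have hκ₂C : C ^ p' ≤ κ₂ := le_trans (le_max_left _ _) (le_max_right _ _)
  have hκ₂D : 2 * D + 1 ≤ κ₂ := le_trans (le_max_right _ _) (le_max_right _ _)
  have hκ₂κ₁ : κ₁ + 1 ≤ κ₂ := le_max_left _ _
  have hsum : 1/p + 1/p' = 1 := by
    rw [hp'def]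
    field_simp
    ring
  clear_value p' E M C D ρ κ₁ κ₂
  refine ⟨ρ, κ₁, κ₂, hρpos, lt_of_le_of_lt hρ1 one_lt_two, hκ₁pos, hκ₁κ₂, ?_, ?_⟩
  · -- small κ
    intro κ hκ hκ1 r hr
    obtain ⟨hr1, hr2⟩ := hr
    have hx : 0 < 1 + r := by linarith
    have hx1 : 1 + r ≤ 1 := by
      have : r < -1 + ρ := hr2
      linarith [hρ1]
    have hrIoo : r ∈ Set.Ioo (-1:ℝ) (-1 + ρ₀) := ⟨hr1, by linarith [hρρ₀]⟩
    have hηr : |η r| < γ₀ / 2 := by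
      apply hδη r ⟨le_of_lt hr1, by linarith⟩
      rw [Real.dist_eq]
      rw [abs_of_nonneg (by linarith : (0:ℝ) ≤ r - (-1))]
      linarith [hρδ]
    rw [hg_asym r hrIoo]
    -- split the rpow
    have hsplit : (κ * (1 + r) ^ (1 + γ)) ^ (1 / p)
        = κ ^ (1/p) * (1 + r) ^ ((1 + γ) / p) := by
      rw [Real.mul_rpow hκ.le (Real.rpow_nonneg hx.le _),
        ← Real.rpow_mul hx.le, mul_one_div]
    rw [hsplit]
    have hxγ : (0:ℝ) < (1 + r) ^ γ := Real.rpow_pos_of_pos hx γ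
    have hxle : (1 + r) ^ ((1 + γ) / p) ≤ (1 + r) ^ γ :=
      Real.rpow_le_rpow_of_exponent_ge hx hx1 hγle
    have hκp : 0 < κ ^ (1/p) := Real.rpow_pos_of_pos hκ _
    -- scalar inequality
    have hκM : κ ^ (1/p) ≤ M := by
      have h1 : κ ^ (1/p) ≤ (M ^ p) ^ (1/p) :=
        Real.rpow_le_rpow hκ.le (le_trans hκ1 hκ₁M) (by positivity)
      calc κ ^ (1/p) ≤ (M ^ p) ^ (1/p) := h1
        _ = M := by
          rw [← Real.rpow_mul hMpos.le, mul_one_div, div_self hp0.ne', Real.rpow_one]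
    have hκκ : κ ≤ κ ^ (1/p) := by
      have := Real.rpow_le_rpow_of_exponent_ge hκ (le_trans hκ1 hκ₁le1)
        (show 1/p ≤ 1 by rw [div_le_one hp0]; linarith)
      rwa [Real.rpow_one] at this
    have key : κ * (1 + γ) + p' * (|c| * κ ^ (1/p)) < p' * (γ₀ / 2) := by
      have a1 : κ * (1 + γ) ≤ κ ^ (1/p) * (1 + γ) :=
        mul_le_mul_of_nonneg_right hκκ (by linarith)
      have a2 : κ ^ (1/p) * ((1 + γ) + p' * |c|) ≤ M * ((1 + γ) + p' * |c|) :=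
        mul_le_mul_of_nonneg_right hκM (by positivity)
      have a3 : M * ((1 + γ) + p' * |c|) + M = p' * (γ₀ / 2) := by
        rw [show p' * (γ₀ / 2) = p' * γ₀ / 2 by ring, ← hME, hEdef]; ring
      linarith [a1, a2, a3, hMpos]
    -- pointwise bound on the c term
    have h1 : -(|c| * κ ^ (1/p)) * (1 + r) ^ γ ≤ c * (κ ^ (1/p) * (1 + r) ^ ((1+γ)/p)) := by
      have hnn : -(|c| * κ ^ (1/p)) ≤ 0 := neg_nonpos.mpr (by positivity)
      have ha : -(|c| * κ ^ (1/p)) * (1 + r) ^ γ ≤ -(|c| * κ ^ (1/p)) * (1 + r) ^ ((1+γ)/p) :=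
        mul_le_mul_of_nonpos_left hxle hnn
      have hb : -(|c| * κ ^ (1/p)) * (1 + r) ^ ((1+γ)/p) ≤ c * (κ ^ (1/p) * (1 + r) ^ ((1+γ)/p)) := by
        have hcc : -|c| ≤ c := neg_abs_le c
        have h := mul_le_mul_of_nonneg_right hcc
          (mul_nonneg hκp.le (Real.rpow_nonneg hx.le ((1+γ)/p)))
        linarith [h]
      linarith
    have hηr' : -(γ₀ / 2) ≤ η r := by
      have h := abs_lt.mp hηr
      linarith [h.1]
    have hmul := mul_lt_mul_of_pos_right key hxγ
    have hA := mul_le_mul_of_nonneg_left h1 hp'pos.le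
    have hB := mul_le_mul_of_nonneg_left (mul_le_mul_of_nonneg_right hηr' hxγ.le) hp'pos.le
    linarith [hA, hB, hmul]
  · -- large κ
    intro κ hκ2 r hr
    obtain ⟨hr1, hr2⟩ := hr
    have hκC : C ^ p' ≤ κ := le_trans hκ₂C hκ2
    have hκD : 2 * D + 1 ≤ κ := le_trans hκ₂D hκ2
    have hκ1' : 1 < κ := by
      have : κ₁ + 1 ≤ κ := le_trans hκ₂κ₁ hκ2
      linarith
    have hκpos : 0 < κ := by linarith
    have hx : 0 < 1 + r := by linarith
    have hx1 : 1 + r ≤ 1 := by linarith [hρ1]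
    have hrIoo : r ∈ Set.Ioo (-1:ℝ) (-1 + ρ₀) := ⟨hr1, by linarith [hρρ₀]⟩
    have hηr : |η r| < γ₀ / 2 := by
      apply hδη r ⟨le_of_lt hr1, by linarith⟩
      rw [Real.dist_eq, abs_of_nonneg (by linarith : (0:ℝ) ≤ r - (-1))]
      linarith [hρδ]
    rw [hg_asym r hrIoo]
    have hsplit : (κ * (1 + r) ^ (1 + γ)) ^ (1 / p)
        = κ ^ (1/p) * (1 + r) ^ ((1 + γ) / p) := by
      rw [Real.mul_rpow hκpos.le (Real.rpow_nonneg hx.le _),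
        ← Real.rpow_mul hx.le, mul_one_div]
    rw [hsplit]
    have hxγ : (0:ℝ) < (1 + r) ^ γ := Real.rpow_pos_of_pos hx γ
    have hxle : (1 + r) ^ ((1 + γ) / p) ≤ (1 + r) ^ γ :=
      Real.rpow_le_rpow_of_exponent_ge hx hx1 hγle
    have hκp : 0 < κ ^ (1/p) := Real.rpow_pos_of_pos hκpos _
    have hκp' : 0 < κ ^ (1/p') := Real.rpow_pos_of_pos hκpos _
    -- κ^{1/p'} ≥ C
    have hCκ : C ≤ κ ^ (1/p') := by
      have h1 : (C ^ p') ^ (1/p') ≤ κ ^ (1/p') :=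
        Real.rpow_le_rpow (by positivity) hκC (by positivity)
      calc C = (C ^ p') ^ (1/p') := by
            rw [← Real.rpow_mul hCpos.le, mul_one_div, div_self hp'pos.ne', Real.rpow_one]
        _ ≤ κ ^ (1/p') := h1
    -- κ^{1/p} * κ^{1/p'} = κ
    have hprod : κ ^ (1/p) * κ ^ (1/p') = κ := by
      rw [← Real.rpow_add hκpos]
      rw [hsum, Real.rpow_one]
    -- scalar inequality: p'*|c|*κ^{1/p} + p'*(3γ₀/2) < κ*(1+γ)
    have key : p' * (|c| * κ ^ (1/p)) + p' * (3 * γ₀ / 2) < κ * (1 + γ) := by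
      have hstep : C * κ ^ (1/p) ≤ κ ^ (1/p') * κ ^ (1/p) :=
        mul_le_mul_of_nonneg_right hCκ hκp.le
      have h1' : (1 + γ) * (C * κ ^ (1/p)) ≤ (1 + γ) * (κ ^ (1/p') * κ ^ (1/p)) :=
        mul_le_mul_of_nonneg_left hstep (by linarith)
      have h1c : (1 + γ) * (C * κ ^ (1/p)) = 2 * p' * (|c| + 1) * κ ^ (1/p) := by
        rw [show (1 + γ) * (C * κ ^ (1/p)) = C * (1 + γ) * κ ^ (1/p) by ring, hC]
      have h2 : κ ^ (1/p') * κ ^ (1/p) = κ := by rw [mul_comm]; exact hprod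
      have hA : 2 * p' * (|c| + 1) * κ ^ (1/p) ≤ (1 + γ) * κ := by
        rw [← h1c]
        calc (1 + γ) * (C * κ ^ (1/p)) ≤ (1 + γ) * (κ ^ (1/p') * κ ^ (1/p)) := h1'
          _ = (1 + γ) * κ := by rw [h2]
      have hB : 0 < p' * κ ^ (1/p) := by positivity
      have hDκ : D * (1 + γ) < κ * (1 + γ) :=
        mul_lt_mul_of_pos_right (by linarith) (by linarith)
      linarith [hA, hB, hD, hDκ]
    have h1 : c * (κ ^ (1/p) * (1 + r) ^ ((1+γ)/p)) ≤ |c| * κ ^ (1/p) * (1 + r) ^ γ := by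
      have ha : c * (κ ^ (1/p) * (1 + r) ^ ((1+γ)/p)) ≤ |c| * κ ^ (1/p) * (1 + r) ^ ((1+γ)/p) := by
        have hcc : c ≤ |c| := le_abs_self c
        have h := mul_le_mul_of_nonneg_right hcc
          (mul_nonneg hκp.le (Real.rpow_nonneg hx.le ((1+γ)/p)))
        linarith [h]
      have hb : |c| * κ ^ (1/p) * (1 + r) ^ ((1+γ)/p) ≤ |c| * κ ^ (1/p) * (1 + r) ^ γ :=
        mul_le_mul_of_nonneg_left hxle (by positivity)
      linarith
    have hηr' : η r ≤ γ₀ / 2 := (abs_lt.mp hηr).2.le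
    have hmul := mul_lt_mul_of_pos_right key hxγ
    have hA := mul_le_mul_of_nonneg_left h1 hp'pos.le
    have hB := mul_le_mul_of_nonneg_left (mul_le_mul_of_nonneg_right hηr' hxγ.le) hp'pos.le
    linarith [hA, hB, hmul]
end

section
/- Suppose c < 0 and g(r) = (γ₀ + η(r))(1+r)^γ near r = -1 with γ₀ > 0, η continuous, η(-1) = 0, and γ > 1/(p-1). Then for every κ > 0 there exists ρ ∈ (0,2) such that w_κ(r) := κ(1+r)^{1+γ} satisfies w_κ'(r) > p'(c·w_κ(r)^{1/p} + g(r)) for all r ∈ (-1,-1+ρ); i.e. w_κ is a strict supersolution near -1. -/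
open Set Filter

theorem stmt17 (p c γ γ₀ ρ₀ : ℝ) (hp : 1 < p) (hc : c < 0)
    (hγ₀ : 0 < γ₀) (hγ : 1 / (p - 1) < γ)
    (hρ₀ : 0 < ρ₀) (hρ₀2 : ρ₀ < 2)
    (g η : ℝ → ℝ) (hg_cont : ContinuousOn g (Set.Icc (-1) 1))
    (hη_cont : ContinuousOn η (Set.Icc (-1) 1)) (hη_init : η (-1) = 0)
    (hg_asym : ∀ r ∈ Set.Ioo (-1 : ℝ) (-1 + ρ₀),
      g r = (γ₀ + η r) * (1 + r) ^ γ) :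
    ∀ κ : ℝ, 0 < κ → ∃ ρ : ℝ, 0 < ρ ∧ ρ < 2 ∧
      ∀ r ∈ Set.Ioo (-1 : ℝ) (-1 + ρ),
        p / (p - 1) * (c * (κ * (1 + r) ^ (1 + γ)) ^ (1 / p) + g r) <
          κ * (1 + γ) * (1 + r) ^ γ := by
  intro κ hκ
  have hp1 : (0:ℝ) < p - 1 := by linarith
  have hp0 : (0:ℝ) < p := by linarith
  have hγpos : 0 < γ := lt_trans (by positivity) hγ
  set α : ℝ := γ - (1 + γ) / p with hαdef
  have hα : 0 < α := by
    have h1 : 1 < γ * (p - 1) := by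
      have := (div_lt_iff₀ hp1).mp hγ
      linarith
    have h2 : (1 + γ) / p < γ := by
      rw [div_lt_iff₀ hp0]; nlinarith
    simp only [hαdef]; linarith
  have hκp : 0 < κ ^ (1 / p) := Real.rpow_pos_of_pos hκ _
  set ε : ℝ := -c * κ ^ (1 / p) with hεdef
  have hε : 0 < ε := mul_pos (neg_pos.mpr hc) hκp
  set M : ℝ := γ₀ + 1 with hMdef
  have hM : 0 < M := by simp only [hMdef]; linarith
  have hεM : 0 < ε / M := div_pos hε hM
  set t : ℝ := (ε / M) ^ α⁻¹ with htdef
  have ht : 0 < t := Real.rpow_pos_of_pos hεM _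
  have hcw : ContinuousWithinAt η (Icc (-1) 1) (-1) :=
    hη_cont (-1) ⟨le_refl _, by norm_num⟩
  rw [ContinuousWithinAt, hη_init] at hcw
  obtain ⟨δ, hδ, hδ'⟩ := Metric.tendsto_nhdsWithin_nhds.mp hcw 1 one_pos
  refine ⟨min ρ₀ (min δ (min t 1)), by positivity, ?_, ?_⟩
  · calc min ρ₀ (min δ (min t 1)) ≤ min δ (min t 1) := min_le_right _ _
      _ ≤ min t 1 := min_le_right _ _
      _ ≤ 1 := min_le_right _ _
      _ < 2 := by norm_num
  intro r hr
  obtain ⟨hr1, hr2⟩ := hr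
  set s := 1 + r with hs
  have hs0 : 0 < s := by simp only [hs]; linarith
  have hsρ₀ : s < ρ₀ := by
    have := hr2.trans_le (by linarith [min_le_left ρ₀ (min δ (min t 1))] : -1 + min ρ₀ (min δ (min t 1)) ≤ -1 + ρ₀)
    simp only [hs]; linarith
  have hsδ : s < δ := by
    have h := min_le_left δ (min t 1)
    have := min_le_right ρ₀ (min δ (min t 1))
    simp only [hs]; linarith
  have hst : s < t := by
    have h := min_le_left t (1:ℝ)
    have h2 := min_le_right δ (min t 1)
    have := min_le_right ρ₀ (min δ (min t 1))
    simp only [hs]; linarith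
  have hs1 : s < 1 := by
    have h := min_le_right t (1:ℝ)
    have h2 := min_le_right δ (min t 1)
    have := min_le_right ρ₀ (min δ (min t 1))
    simp only [hs]; linarith
  have hrIcc : r ∈ Icc (-1:ℝ) 1 := ⟨hr1.le, by simp only [hs] at hs1; linarith⟩
  have hηr : |η r| < 1 := by
    have hdist : dist r (-1) < δ := by
      rw [Real.dist_eq]
      have : r - (-1) = s := by simp only [hs]; ring
      rw [this, abs_of_pos hs0]; exact hsδ
    have := hδ' hrIcc hdist
    rwa [Real.dist_eq, sub_zero] at this
  have hgr : g r = (γ₀ + η r) * s ^ γ := hg_asym r ⟨hr1, by linarith⟩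
  -- rewrite the rpow of the product
  have hsplit : (κ * s ^ (1 + γ)) ^ (1 / p) = κ ^ (1 / p) * s ^ ((1 + γ) / p) := by
    rw [Real.mul_rpow hκ.le (Real.rpow_nonneg hs0.le _), ← Real.rpow_mul hs0.le,
      mul_one_div]
  have hsγ : s ^ γ = s ^ ((1 + γ) / p) * s ^ α := by
    rw [← Real.rpow_add hs0]
    congr 1
    simp only [hαdef]; ring
  -- key: inner term negative
  have hsα : s ^ α < ε / M := by
    have h1 : s ^ α < t ^ α := Real.rpow_lt_rpow hs0.le hst hα
    have h2 : t ^ α = ε / M := by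
      rw [htdef, ← Real.rpow_mul hεM.le, inv_mul_cancel₀ hα.ne', Real.rpow_one]
    linarith
  have hinner : c * κ ^ (1 / p) + (γ₀ + η r) * s ^ α < 0 := by
    have hb : γ₀ + η r ≤ M := by
      have := abs_lt.mp hηr
      simp only [hMdef]; linarith [this.2]
    have hsαpos : 0 < s ^ α := Real.rpow_pos_of_pos hs0 _
    have : (γ₀ + η r) * s ^ α ≤ M * s ^ α := mul_le_mul_of_nonneg_right hb hsαpos.le
    have hMs : M * s ^ α < ε := by
      have := mul_lt_mul_of_pos_left hsα hM
      rw [mul_div_cancel₀ _ hM.ne'] at this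
      linarith
    have hring : -c * κ ^ (1 / p) = -(c * κ ^ (1 / p)) := by ring
    rw [hεdef, hring] at hMs
    nlinarith [this, hMs]
  have hneg : c * (κ * s ^ (1 + γ)) ^ (1 / p) + g r < 0 := by
    rw [hsplit, hgr, hsγ]
    have hpow : 0 < s ^ ((1 + γ) / p) := Real.rpow_pos_of_pos hs0 _
    calc c * (κ ^ (1 / p) * s ^ ((1 + γ) / p)) + (γ₀ + η r) * (s ^ ((1 + γ) / p) * s ^ α)
        = s ^ ((1 + γ) / p) * (c * κ ^ (1 / p) + (γ₀ + η r) * s ^ α) := by ring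
      _ < 0 := mul_neg_of_pos_of_neg hpow hinner
  have hRHS : 0 < κ * (1 + γ) * s ^ γ := by
    have : 0 < s ^ γ := Real.rpow_pos_of_pos hs0 _
    have : 0 < 1 + γ := by linarith
    positivity
  have hfrac : 0 < p / (p - 1) := div_pos hp0 hp1
  calc p / (p - 1) * (c * (κ * s ^ (1 + γ)) ^ (1 / p) + g r) < 0 :=
        mul_neg_of_pos_of_neg hfrac hneg
    _ < κ * (1 + γ) * s ^ γ := hRHS
end

section
/- Assume the solution y of the boundary value problem with c = c* satisfies κ₁(1+r)^{1+γ} ≤ y(r) ≤ κ₂(1+r)^{1+γ} for r ∈ (-1,-1+ρ), with 0 < κ₁ < κ₂ and γ > 0, and let V(U) = y(U)^{1/p'}. Then the solution x(U) = x₀ - ∫₀^U (d(r)/V(r))^{1/(p-1)} dr of dx/dU = -(d(U)/V(U))^{1/(p-1)} satisfies: lim_{U→-1+} x(U) = +∞ if and only if (1+γ)/p ≥ 1, i.e. γ ≥ p-1 (for 1 < p ≤ 2); the limit is finite if γ < p-1. -/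
open Set Filter Topology MeasureTheory

theorem stmt18 (p γ κ₁ κ₂ ρ x₀ : ℝ) (hp1 : 1 < p) (hp2 : p ≤ 2)
    (hγ : 0 < γ) (hκ₁ : 0 < κ₁) (hκ : κ₁ < κ₂) (hρ : 0 < ρ) (hρ2 : ρ < 2)
    (d y : ℝ → ℝ)
    (hd_cont : ContinuousOn d (Set.Icc (-1) 1))
    (hd_pos : ∀ r ∈ Set.Icc (-1 : ℝ) 1, 0 < d r)
    (hy_cont : ContinuousOn y (Set.Icc (-1) 1))
    (hy_pos : ∀ r ∈ Set.Ioo (-1 : ℝ) 1, 0 < y r)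
    (hbound : ∀ r ∈ Set.Ioo (-1 : ℝ) (-1 + ρ),
      κ₁ * (1 + r) ^ (1 + γ) ≤ y r ∧ y r ≤ κ₂ * (1 + r) ^ (1 + γ)) :
    ∀ V x : ℝ → ℝ,
      V = (fun U : ℝ => (y U) ^ (1 / (p / (p - 1)))) →
      x = (fun U : ℝ => x₀ - ∫ r in (0 : ℝ)..U, (d r / V r) ^ (1 / (p - 1))) →
      (Filter.Tendsto x (nhdsWithin (-1) (Set.Ioi (-1))) Filter.atTop ↔
        p - 1 ≤ γ) ∧
      (γ < p - 1 → ∃ L : ℝ,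
        Filter.Tendsto x (nhdsWithin (-1) (Set.Ioi (-1))) (nhds L)) := by
  rintro V x rfl rfl
  have hp0 : (0:ℝ) < p := by linarith
  have hp1' : (0:ℝ) < p - 1 := by linarith
  set f : ℝ → ℝ := fun r => (d r / y r ^ (1 / (p / (p - 1)))) ^ (1 / (p - 1)) with hfdef
  set q : ℝ := 1 / (p - 1) with hqdef
  have hq : 0 < q := by positivity
  set a : ℝ := (1 + γ) / p with hadef
  have ha : 0 < a := by positivity
  -- membership in Ioo (-1) 1
  have hVpos : ∀ r ∈ Ioo (-1:ℝ) 1, 0 < y r ^ (1 / (p / (p - 1))) :=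
    fun r hr => Real.rpow_pos_of_pos (hy_pos r hr) _
  have hf_pos : ∀ r ∈ Ioo (-1:ℝ) 1, 0 < f r :=
    fun r hr => Real.rpow_pos_of_pos
      (div_pos (hd_pos r (Ioo_subset_Icc_self hr)) (hVpos r hr)) _
  have hf_cont : ContinuousOn f (Ioo (-1:ℝ) 1) := by
    apply ContinuousOn.rpow_const
    · exact ContinuousOn.div (hd_cont.mono Ioo_subset_Icc_self)
        (ContinuousOn.rpow_const (hy_cont.mono Ioo_subset_Icc_self)
          (fun r hr => Or.inl (ne_of_gt (hy_pos r hr))))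
        (fun r hr => ne_of_gt (hVpos r hr))
    · exact fun r _ => Or.inr (by positivity)
  have hexp : (1:ℝ) / (p / (p - 1)) = (p-1)/p := one_div_div _ _
  have hf_eq : ∀ r ∈ Ioo (-1:ℝ) 1, f r = d r ^ q / y r ^ (1/p) := by
    intro r hr
    have hd0 : 0 ≤ d r := (hd_pos r (Ioo_subset_Icc_self hr)).le
    have hy0 : 0 < y r := hy_pos r hr
    rw [hfdef]
    simp only
    have hexp2 : (p-1)/p * (1/(p-1)) = 1/p := by
      rw [div_mul_div_comm, div_eq_div_iff (by positivity) (by positivity)]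
      ring
    rw [hexp, Real.div_rpow hd0 (Real.rpow_nonneg hy0.le _), ← Real.rpow_mul hy0.le,
      hqdef, hexp2]
  -- min and max of d
  obtain ⟨rmin, hrmin, hdmin⟩ := isCompact_Icc.exists_isMinOn
    (nonempty_Icc.mpr (by norm_num : (-1:ℝ) ≤ 1)) hd_cont
  obtain ⟨rmax, hrmax, hdmax⟩ := isCompact_Icc.exists_isMaxOn
    (nonempty_Icc.mpr (by norm_num : (-1:ℝ) ≤ 1)) hd_cont
  have hdminpos : 0 < d rmin := hd_pos rmin hrmin
  -- the cut point
  set s0 : ℝ := -1 + min ρ 1 / 2 with hs0def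
  have hmin_pos : 0 < min ρ 1 := lt_min hρ one_pos
  have hs0a : -1 < s0 := by rw [hs0def]; linarith
  have hs0b : s0 < -1 + ρ := by
    have := min_le_left ρ 1; rw [hs0def]; linarith
  have hs0c : s0 < 0 := by
    have := min_le_right ρ 1; rw [hs0def]; linarith
  have hs0d : s0 < 1 := by linarith
  have hmem : ∀ r ∈ Ioc (-1:ℝ) s0,
      r ∈ Ioo (-1:ℝ) (-1+ρ) ∧ r ∈ Ioo (-1:ℝ) 1 ∧ 0 < 1 + r ∧ 1 + r ≤ 1 := by
    intro r hr
    refine ⟨⟨hr.1, lt_of_le_of_lt hr.2 hs0b⟩, ⟨hr.1, lt_of_le_of_lt hr.2 hs0d⟩,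
      by linarith [hr.1], by linarith [le_trans hr.2 hs0c.le]⟩
  set Cu : ℝ := d rmax ^ q / κ₁ ^ (1/p) with hCudef
  set Cl : ℝ := d rmin ^ q / κ₂ ^ (1/p) with hCldef
  have hκ₂ : 0 < κ₂ := lt_trans hκ₁ hκ
  have hdMpos : 0 < d rmax := hd_pos rmax hrmax
  have hCu : 0 < Cu := by
    rw [hCudef]
    exact div_pos (Real.rpow_pos_of_pos hdMpos _) (Real.rpow_pos_of_pos hκ₁ _)
  have hCl : 0 < Cl := by
    rw [hCldef]
    exact div_pos (Real.rpow_pos_of_pos hdminpos _) (Real.rpow_pos_of_pos hκ₂ _)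
  have haux : ∀ (κ : ℝ), 0 < κ → ∀ r : ℝ, 0 < 1 + r →
      (κ * (1+r)^(1+γ)) ^ (1/p) = κ ^ (1/p) * (1+r) ^ a := by
    intro κ hκ0 r h3
    rw [Real.mul_rpow hκ0.le (Real.rpow_nonneg h3.le _), ← Real.rpow_mul h3.le]
    congr 1
    rw [hadef]; ring
  have hub : ∀ r ∈ Ioc (-1:ℝ) s0, f r ≤ Cu * (1 + r) ^ (-a) := by
    intro r hr
    obtain ⟨h1, h2, h3, _⟩ := hmem r hr
    rw [hf_eq r h2]
    have hdr : 0 < d r := hd_pos r (Ioo_subset_Icc_self h2)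
    have num : d r ^ q ≤ d rmax ^ q :=
      Real.rpow_le_rpow hdr.le (hdmax (Ioo_subset_Icc_self h2)) hq.le
    have hylb : κ₁ * (1+r)^(1+γ) ≤ y r := (hbound r h1).1
    have den : κ₁ ^ (1/p) * (1+r) ^ a ≤ y r ^ (1/p) := by
      rw [← haux κ₁ hκ₁ r h3]
      exact Real.rpow_le_rpow (by positivity) hylb (by positivity)
    have denpos : 0 < κ₁ ^ (1/p) * (1+r) ^ a := by positivity
    calc d r ^ q / y r ^ (1/p)
        ≤ d rmax ^ q / (κ₁ ^ (1/p) * (1+r) ^ a) :=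
          div_le_div₀ (Real.rpow_nonneg (hd_pos rmax hrmax).le _) num denpos den
      _ = Cu * (1+r) ^ (-a) := by
          rw [Real.rpow_neg h3.le, ← div_div, hCudef, div_eq_mul_inv]
  have hlb : ∀ r ∈ Ioc (-1:ℝ) s0, Cl * (1 + r) ^ (-a) ≤ f r := by
    intro r hr
    obtain ⟨h1, h2, h3, _⟩ := hmem r hr
    rw [hf_eq r h2]
    have hdr : 0 < d r := hd_pos r (Ioo_subset_Icc_self h2)
    have num : d rmin ^ q ≤ d r ^ q :=
      Real.rpow_le_rpow hdminpos.le (hdmin (Ioo_subset_Icc_self h2)) hq.le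
    have hyub : y r ≤ κ₂ * (1+r)^(1+γ) := (hbound r h1).2
    have den : y r ^ (1/p) ≤ κ₂ ^ (1/p) * (1+r) ^ a := by
      rw [← haux κ₂ hκ₂ r h3]
      exact Real.rpow_le_rpow (hy_pos r h2).le hyub (by positivity)
    have ypos : 0 < y r ^ (1/p) := Real.rpow_pos_of_pos (hy_pos r h2) _
    calc Cl * (1+r) ^ (-a)
        = d rmin ^ q / (κ₂ ^ (1/p) * (1+r) ^ a) := by
          rw [Real.rpow_neg h3.le, ← div_div, hCldef]
          ring
      _ ≤ d r ^ q / y r ^ (1/p) := div_le_div₀ (Real.rpow_nonneg hdr.le _) num ypos den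
  -- decomposition of x
  have hx_decomp : ∀ U ∈ Ioo (-1:ℝ) s0,
      x₀ - ∫ r in (0:ℝ)..U, f r
        = x₀ + (∫ r in U..s0, f r) + ∫ r in s0..(0:ℝ), f r := by
    intro U hU
    have hi1 : IntervalIntegrable f volume U s0 := by
      apply ContinuousOn.intervalIntegrable
      apply hf_cont.mono
      rw [uIcc_of_le hU.2.le]
      exact fun r hr => ⟨lt_of_lt_of_le hU.1 hr.1, lt_of_le_of_lt hr.2 hs0d⟩
    have hi2 : IntervalIntegrable f volume s0 0 := by
      apply ContinuousOn.intervalIntegrable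
      apply hf_cont.mono
      rw [uIcc_of_le hs0c.le]
      exact fun r hr => ⟨lt_of_lt_of_le hs0a hr.1, lt_of_le_of_lt hr.2 one_pos⟩
    have := intervalIntegral.integral_add_adjacent_intervals hi1 hi2
    rw [intervalIntegral.integral_symm]
    linarith [this]
  -- the finite-limit case
  have finite_case : γ < p - 1 → ∃ L : ℝ,
      Tendsto (fun U : ℝ => x₀ - ∫ r in (0:ℝ)..U, f r) (𝓝[>] (-1:ℝ)) (𝓝 L) := by
    intro hlt
    have haa : a < 1 := by rw [hadef, div_lt_one hp0]; linarith
    -- integrability of the comparison function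
    have hg_int : IntervalIntegrable (fun r : ℝ => (1+r) ^ (-a)) volume (-1) s0 := by
      have h := intervalIntegral.intervalIntegrable_rpow'
        (a := 0) (b := 1 + s0) (r := -a) (by linarith)
      have h2 := h.comp_add_left 1
      simpa using h2
    have hint1 : MeasureTheory.IntegrableOn f (Ioc (-1) s0) := by
      have hgi : MeasureTheory.IntegrableOn (fun r : ℝ => Cu * (1+r) ^ (-a)) (Ioc (-1) s0) :=
        ((intervalIntegrable_iff_integrableOn_Ioc_of_le hs0a.le).mp hg_int).const_mul Cu
      refine MeasureTheory.Integrable.mono' hgi ?_ ?_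
      · exact (hf_cont.mono (fun r hr => ⟨hr.1, lt_of_le_of_lt hr.2 hs0d⟩)).aestronglyMeasurable
          measurableSet_Ioc
      · rw [MeasureTheory.ae_restrict_iff' measurableSet_Ioc]
        filter_upwards with r hr
        rw [Real.norm_of_nonneg (hf_pos r ⟨hr.1, lt_of_le_of_lt hr.2 hs0d⟩).le]
        exact hub r hr
    have hint2 : MeasureTheory.IntegrableOn f (Ioc s0 0) := by
      apply MeasureTheory.IntegrableOn.mono_set _ Ioc_subset_Icc_self
      apply ContinuousOn.integrableOn_Icc
      exact hf_cont.mono (fun r hr => ⟨lt_of_lt_of_le hs0a hr.1, lt_of_le_of_lt hr.2 one_pos⟩)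
    have hfint : IntervalIntegrable f volume (-1) 0 := by
      rw [intervalIntegrable_iff_integrableOn_Ioc_of_le (by norm_num : (-1:ℝ) ≤ 0)]
      rw [← Ioc_union_Ioc_eq_Ioc hs0a.le hs0c.le]
      exact hint1.union hint2
    refine ⟨x₀ + ∫ r in (-1:ℝ)..0, f r, ?_⟩
    have hprim : ContinuousOn (fun U : ℝ => ∫ t in (-1:ℝ)..U, f t) (Icc (-1:ℝ) 0) := by
      have : MeasureTheory.IntegrableOn f (uIcc (-1:ℝ) 0) := by
        rw [uIcc_of_le (by norm_num : (-1:ℝ) ≤ 0), integrableOn_Icc_iff_integrableOn_Ioc]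
        exact (intervalIntegrable_iff_integrableOn_Ioc_of_le (by norm_num : (-1:ℝ) ≤ 0)).mp hfint
      have := intervalIntegral.continuousOn_primitive_interval this
      rwa [uIcc_of_le (by norm_num : (-1:ℝ) ≤ 0)] at this
    have hprim_tendsto : Tendsto (fun U : ℝ => ∫ t in (-1:ℝ)..U, f t)
        (𝓝[>] (-1:ℝ)) (𝓝 0) := by
      have h1 := (hprim (-1) ⟨le_refl _, by norm_num⟩)
      rw [ContinuousWithinAt] at h1
      rw [intervalIntegral.integral_same] at h1
      have h2 : Tendsto (fun U : ℝ => ∫ t in (-1:ℝ)..U, f t)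
          (𝓝[Ioo (-1:ℝ) 0] (-1:ℝ)) (𝓝 0) :=
        h1.mono_left (nhdsWithin_mono _ Ioo_subset_Icc_self)
      rwa [nhdsWithin_Ioo_eq_nhdsGT (by norm_num : (-1:ℝ) < 0)] at h2
    have heq : ∀ᶠ U in 𝓝[>] (-1:ℝ),
        x₀ - ∫ r in (0:ℝ)..U, f r
          = (x₀ + ∫ r in (-1:ℝ)..0, f r) - ∫ r in (-1:ℝ)..U, f r := by
      filter_upwards [Ioo_mem_nhdsGT_of_mem
        (⟨le_refl _, by norm_num⟩ : (-1:ℝ) ∈ Ico (-1:ℝ) 0)] with U hU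
      have hiU : IntervalIntegrable f volume (-1) U := by
        apply hfint.mono_set
        rw [uIcc_of_le hU.1.le, uIcc_of_le (by norm_num : (-1:ℝ) ≤ 0)]
        exact Icc_subset_Icc le_rfl hU.2.le
      have hiU2 : IntervalIntegrable f volume U 0 := by
        apply hfint.mono_set
        rw [uIcc_of_le hU.2.le, uIcc_of_le (by norm_num : (-1:ℝ) ≤ 0)]
        exact Icc_subset_Icc hU.1.le le_rfl
      have hadd := intervalIntegral.integral_add_adjacent_intervals hiU hiU2
      rw [intervalIntegral.integral_symm]
      linarith [hadd]
    rw [tendsto_congr' heq]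
    have := tendsto_const_nhds (α := ℝ)
      (x := x₀ + ∫ r in (-1:ℝ)..0, f r) (f := 𝓝[>] (-1:ℝ)) |>.sub hprim_tendsto
    simpa using this
  -- the divergence case
  have diverge_case : p - 1 ≤ γ →
      Tendsto (fun U : ℝ => x₀ - ∫ r in (0:ℝ)..U, f r) (𝓝[>] (-1:ℝ)) atTop := by
    intro hge
    have haa : 1 ≤ a := by rw [hadef, le_div_iff₀ hp0]; linarith
    have key : ∀ U ∈ Ioo (-1:ℝ) s0,
        x₀ + Cl * (Real.log (1+s0) - Real.log (1+U))
          ≤ x₀ - ∫ r in (0:ℝ)..U, f r := by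
      intro U hU
      rw [hx_decomp U hU]
      have hUpos : 0 < 1 + U := by linarith [hU.1]
      have hs0pos : 0 < 1 + s0 := by linarith
      -- third piece is nonnegative
      have h3 : 0 ≤ ∫ r in s0..(0:ℝ), f r := by
        apply intervalIntegral.integral_nonneg hs0c.le
        intro r hr
        exact (hf_pos r ⟨lt_of_lt_of_le hs0a hr.1, lt_of_le_of_lt hr.2 one_pos⟩).le
      -- middle piece
      have hi1 : IntervalIntegrable f volume U s0 := by
        apply ContinuousOn.intervalIntegrable
        apply hf_cont.mono
        rw [uIcc_of_le hU.2.le]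
        exact fun r hr => ⟨lt_of_lt_of_le hU.1 hr.1, lt_of_le_of_lt hr.2 hs0d⟩
      have hgcont : ContinuousOn (fun r : ℝ => Cl * (1+r)⁻¹) (Icc U s0) := by
        refine ContinuousOn.mul continuousOn_const ?_
        apply ContinuousOn.inv₀ (continuousOn_const.add continuousOn_id)
        intro r hr
        have : 0 < 1 + r := by linarith [hr.1, hU.1]
        exact ne_of_gt this
      have hi0 : IntervalIntegrable (fun r : ℝ => Cl * (1+r)⁻¹) volume U s0 := by
        apply ContinuousOn.intervalIntegrable
        rwa [uIcc_of_le hU.2.le]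
      have hmono : ∫ r in U..s0, Cl * (1+r)⁻¹ ≤ ∫ r in U..s0, f r := by
        apply intervalIntegral.integral_mono_on hU.2.le hi0 hi1
        intro r hr
        have hr1 : r ∈ Ioc (-1:ℝ) s0 := ⟨lt_of_lt_of_le hU.1 hr.1, hr.2⟩
        obtain ⟨_, _, h3', h4'⟩ := hmem r hr1
        have hstep : (1+r) ^ (-(1:ℝ)) ≤ (1+r) ^ (-a) :=
          Real.rpow_le_rpow_of_exponent_ge h3' h4' (by linarith)
        rw [Real.rpow_neg_one] at hstep
        calc Cl * (1+r)⁻¹ ≤ Cl * (1+r) ^ (-a) := by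
              apply mul_le_mul_of_nonneg_left hstep hCl.le
          _ ≤ f r := hlb r hr1
      have hcalc : ∫ r in U..s0, Cl * (1+r)⁻¹
          = Cl * (Real.log (1+s0) - Real.log (1+U)) := by
        rw [intervalIntegral.integral_const_mul]
        have : ∫ r in U..s0, (1+r)⁻¹ = ∫ x in (1+U)..(1+s0), x⁻¹ :=
          intervalIntegral.integral_comp_add_left (fun x => x⁻¹) 1
        rw [this, integral_inv_of_pos hUpos hs0pos,
          Real.log_div (ne_of_gt hs0pos) (ne_of_gt hUpos)]
      linarith [hmono, hcalc ▸ hmono]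
    -- lower bound tends to atTop
    have h1 : Tendsto (fun U : ℝ => 1 + U) (𝓝[>] (-1:ℝ)) (𝓝[>] (0:ℝ)) := by
      rw [tendsto_nhdsWithin_iff]
      constructor
      · have : Tendsto (fun U : ℝ => 1 + U) (𝓝 (-1:ℝ)) (𝓝 (1 + (-1:ℝ))) :=
          (continuous_const.add continuous_id).tendsto _
        simp only [add_neg_cancel] at this
        exact this.mono_left nhdsWithin_le_nhds
      · filter_upwards [self_mem_nhdsWithin] with U hU
        simp only [mem_Ioi] at hU ⊢
        linarith
    have h2 : Tendsto (fun U : ℝ => Real.log (1+U)) (𝓝[>] (-1:ℝ)) atBot :=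
      Real.tendsto_log_nhdsGT_zero.comp h1
    have h3 : Tendsto (fun U : ℝ => Real.log (1+s0) - Real.log (1+U))
        (𝓝[>] (-1:ℝ)) atTop := by
      have := tendsto_neg_atBot_atTop.comp h2
      have h4 := tendsto_atTop_add_const_left _ (Real.log (1+s0)) this
      simpa [sub_eq_add_neg, Function.comp] using h4
    have h5 := Filter.Tendsto.const_mul_atTop hCl h3
    have h6 := tendsto_atTop_add_const_left _ x₀ h5
    apply tendsto_atTop_mono' _ _ h6
    filter_upwards [Ioo_mem_nhdsGT_of_mem
      (⟨le_refl _, hs0a⟩ : (-1:ℝ) ∈ Ico (-1:ℝ) s0)] with U hU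
    exact key U hU
  refine ⟨⟨?_, diverge_case⟩, finite_case⟩
  intro htop
  by_contra hcon
  push_neg at hcon
  obtain ⟨L, hL⟩ := finite_case hcon
  exact not_tendsto_atTop_of_tendsto_nhds hL htop
end
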